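/- arXiv:0903.1456 — 10 statements merged into one kernel-verified Lean document; each statement's English description precedes it below -/
import Mathlib

section
/- Let a countable discrete group Γ act on a σ-finite measure space (M, B, m) by measure-preserving automorphisms, with fundamental domain X. A family of measurable sets (F_i)_{i∈I} packs by Γ (i.e., the sets γ·F_i for (γ,i) ranging over Γ×I are pairwise disjoint up to measure zero) if and only if there exists a family (X_i)_{i∈I} of pairwise disjoint measurable subsets of X such that F_i is Γ-equivalent to X_i for every i ∈ I. -/
/-!
A `Γ`-equivalence `E ~ Y` with `Y` inside the fundamental domain `X` writes `E` a.e. as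
`⋃ γ, γ⁻¹ • Q γ` with the pieces `Q γ` a.e. disjoint inside `Y`. Translates of pieces by
different group elements are a.e. disjoint because the translates of `X` are; translates by the
same element are a.e. disjoint because the pieces are (or, for two sets equivalent to a.e.
disjoint subsets of `X`, because those subsets are). Conversely, if the translates of `E`
are a.e. disjoint, cutting `E` along the translates `γ⁻¹ • X` and moving each part back by `γ`
gives an equivalence of `E` with `⋃ γ, γ • E ∩ X ⊆ X`.
-/

open MeasureTheory Set Pointwise

/-- `E` and `F` are `Γ`-equivalent: there are measurable partitions (up to null sets)
`(P γ)` of `E` and `(γ • P γ)` of `F`. -/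
def GammaEquiv {M : Type*} [MeasurableSpace M] (Γ : Type*) [Group Γ] [MulAction Γ M]
    (μ : Measure M) (E F : Set M) : Prop :=
  ∃ P : Γ → Set M,
    (∀ γ, MeasurableSet (P γ)) ∧
    (Pairwise fun γ γ' => μ (P γ ∩ P γ') = 0) ∧
    μ (symmDiff E (⋃ γ, P γ)) = 0 ∧
    (Pairwise fun γ γ' => μ ((γ • P γ) ∩ (γ' • P γ')) = 0) ∧
    μ (symmDiff F (⋃ γ : Γ, γ • P γ)) = 0

section

variable {M Γ : Type*} [MeasurableSpace M] [Group Γ] [MulAction Γ M] {μ : Measure M}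
  {X E E' Y Y' : Set M}

theorem gammaEquiv_iUnion_smul_inter [MeasurableConstSMul Γ M]
    (hX : IsFundamentalDomain Γ X μ) (hXmeas : MeasurableSet X) (hE : MeasurableSet E)
    (hpack : Pairwise fun g h : Γ => AEDisjoint μ (g • E) (h • E)) :
    GammaEquiv Γ μ E (⋃ γ : Γ, γ • E ∩ X) := by
  have hpiece (γ : Γ) : γ • (E ∩ γ⁻¹ • X) = γ • E ∩ X := by
    rw [smul_set_inter, smul_inv_smul]
  refine ⟨fun γ => E ∩ γ⁻¹ • X, fun γ => hE.inter (hXmeas.const_smul _),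
    fun γ γ' hne => ?_, ?_, fun γ γ' hne => ?_, ?_⟩
  · exact (hX.aedisjoint (inv_injective.ne hne)).mono inter_subset_right inter_subset_right
  · refine measure_symmDiff_eq_zero_iff.2 ?_
    simp only [← inter_iUnion, iUnion_inv_smul]
    simpa only [inter_univ] using ((ae_eq_refl E).inter hX.iUnion_smul_ae_eq).symm
  · simp only [hpiece]
    exact (hpack hne).mono inter_subset_left inter_subset_left
  · simp only [hpiece, symmDiff_self, bot_eq_empty, measure_empty]

theorem GammaEquiv.exists_ae_eq_iUnion_inv_smul (h : GammaEquiv Γ μ E Y) :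
    ∃ Q : Γ → Set M, (Pairwise fun γ γ' => AEDisjoint μ (Q γ) (Q γ')) ∧
      (∀ γ, Q γ ≤ᵐ[μ] Y) ∧ E =ᵐ[μ] ⋃ γ, γ⁻¹ • Q γ := by
  obtain ⟨P, -, -, hE, hQ, hY⟩ := h
  refine ⟨fun γ => γ • P γ, hQ, fun γ => ?_, ?_⟩
  · exact (subset_iUnion (fun γ => γ • P γ) γ).eventuallyLE.trans
      (measure_symmDiff_eq_zero_iff.1 hY).symm.le
  · simpa only [inv_smul_smul] using measure_symmDiff_eq_zero_iff.1 hE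

variable [SMulInvariantMeasure Γ M μ]

theorem MeasureTheory.IsFundamentalDomain.aedisjoint_smul_smul (hX : IsFundamentalDomain Γ X μ)
    {A B : Set M} (hA : A ≤ᵐ[μ] X) (hB : B ≤ᵐ[μ] X) {a b : Γ}
    (hAB : a = b → AEDisjoint μ A B) : AEDisjoint μ (a • A) (b • B) := by
  obtain rfl | hab := eq_or_ne a b
  · rw [AEDisjoint, ← smul_set_inter]
    exact measure_smul_null (hAB rfl) a
  · exact (hX.aedisjoint hab).mono_ae ((smul_set_ae_le a).2 hA) ((smul_set_ae_le b).2 hB)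

variable [Countable Γ]

theorem MeasureTheory.IsFundamentalDomain.aedisjoint_smul_smul_of_ae_eq_iUnion
    (hX : IsFundamentalDomain Γ X μ) {Q R : Γ → Set M}
    (hQ : ∀ γ, Q γ ≤ᵐ[μ] X) (hR : ∀ δ, R δ ≤ᵐ[μ] X)
    (hE : E =ᵐ[μ] ⋃ γ, γ⁻¹ • Q γ) (hE' : E' =ᵐ[μ] ⋃ δ, δ⁻¹ • R δ) {g h : Γ}
    (hQR : ∀ γ δ, g * γ⁻¹ = h * δ⁻¹ → AEDisjoint μ (Q γ) (R δ)) :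
    AEDisjoint μ (g • E) (h • E') := by
  have hgE : g • E =ᵐ[μ] ⋃ γ, (g * γ⁻¹) • Q γ := by
    simpa only [smul_set_iUnion, smul_smul] using (smul_set_ae_eq g).2 hE
  have hhE' : h • E' =ᵐ[μ] ⋃ δ, (h * δ⁻¹) • R δ := by
    simpa only [smul_set_iUnion, smul_smul] using (smul_set_ae_eq h).2 hE'
  refine AEDisjoint.congr ?_ hgE hhE'
  exact AEDisjoint.iUnion_left_iff.2 fun γ => AEDisjoint.iUnion_right_iff.2 fun δ =>
    hX.aedisjoint_smul_smul (hQ γ) (hR δ) (hQR γ δ)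

theorem GammaEquiv.aedisjoint_smul_smul (hX : IsFundamentalDomain Γ X μ)
    (hEY : GammaEquiv Γ μ E Y) (hE'Y' : GammaEquiv Γ μ E' Y')
    (hYX : Y ≤ᵐ[μ] X) (hY'X : Y' ≤ᵐ[μ] X) (hYY' : AEDisjoint μ Y Y') (g h : Γ) :
    AEDisjoint μ (g • E) (h • E') := by
  obtain ⟨Q, -, hQY, hE⟩ := hEY.exists_ae_eq_iUnion_inv_smul
  obtain ⟨R, -, hRY', hE'⟩ := hE'Y'.exists_ae_eq_iUnion_inv_smul
  exact hX.aedisjoint_smul_smul_of_ae_eq_iUnion (fun γ => (hQY γ).trans hYX)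
    (fun δ => (hRY' δ).trans hY'X) hE hE' fun γ δ _ => hYY'.mono_ae (hQY γ) (hRY' δ)

theorem GammaEquiv.aedisjoint_smul_smul_self (hX : IsFundamentalDomain Γ X μ)
    (hEY : GammaEquiv Γ μ E Y) (hYX : Y ≤ᵐ[μ] X) {g h : Γ} (hgh : g ≠ h) :
    AEDisjoint μ (g • E) (h • E) := by
  obtain ⟨Q, hQ, hQY, hE⟩ := hEY.exists_ae_eq_iUnion_inv_smul
  refine hX.aedisjoint_smul_smul_of_ae_eq_iUnion (fun γ => (hQY γ).trans hYX)
    (fun δ => (hQY δ).trans hYX) hE hE fun γ δ hγδ => hQ ?_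
  rintro rfl
  exact hgh (mul_right_cancel hγδ)

end

theorem packs_iff_equiv_subsets_of_fundamentalDomain_general
    {M : Type*} [MeasurableSpace M] {Γ : Type*} [Group Γ] [Countable Γ]
    [MulAction Γ M]
    (hmeas : ∀ γ : Γ, Measurable fun x : M => γ • x)
    (μ : Measure M) [SMulInvariantMeasure Γ M μ]
    (X : Set M) (hXmeas : MeasurableSet X) (hX : IsFundamentalDomain Γ X μ)
    {I : Type*} (F : I → Set M) (hFmeas : ∀ i, MeasurableSet (F i)) :
    (∀ (g h : Γ) (i j : I), (g, i) ≠ (h, j) → μ ((g • F i) ∩ (h • F j)) = 0) ↔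
      ∃ Xi : I → Set M,
        (∀ i, MeasurableSet (Xi i)) ∧
        (∀ i, Xi i ⊆ X) ∧
        (Pairwise fun i j => μ (Xi i ∩ Xi j) = 0) ∧
        (∀ i, GammaEquiv Γ μ (F i) (Xi i)) := by
  have : MeasurableConstSMul Γ M := ⟨hmeas⟩
  constructor
  · intro hpack
    refine ⟨fun i => ⋃ γ : Γ, γ • F i ∩ X,
      fun i => .iUnion fun γ => ((hFmeas i).const_smul γ).inter hXmeas,
      fun i => iUnion_subset fun _ => inter_subset_right, fun i j hij => ?_, fun i => ?_⟩
    · exact AEDisjoint.iUnion_left_iff.2 fun γ => AEDisjoint.iUnion_right_iff.2 fun δ =>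
        AEDisjoint.mono (hpack γ δ i j (by simp [hij])) inter_subset_left inter_subset_left
    · exact gammaEquiv_iUnion_smul_inter hX hXmeas (hFmeas i)
        fun g h hgh => hpack g h i i (by simp [hgh])
  · rintro ⟨Xi, -, hXiX, hXi, hequiv⟩ g h i j hne
    obtain rfl | hij := eq_or_ne i j
    · exact (hequiv i).aedisjoint_smul_smul_self hX (hXiX i).eventuallyLE
        fun hgh => hne (by rw [hgh])
    · exact (hequiv i).aedisjoint_smul_smul hX (hequiv j) (hXiX i).eventuallyLE
        (hXiX j).eventuallyLE (hXi hij) g h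

/-- A family `(F i)` of measurable sets packs by `Γ` iff there is a family of pairwise
a.e. disjoint measurable subsets `(X i)` of the fundamental domain `X` such that
`F i` is `Γ`-equivalent to `X i` for every `i`. -/
theorem packs_iff_equiv_subsets_of_fundamentalDomain
    {M : Type*} [MeasurableSpace M] {Γ : Type*} [Group Γ] [Countable Γ]
    [MulAction Γ M]
    (hmeas : ∀ γ : Γ, Measurable fun x : M => γ • x)
    (μ : Measure M) [SigmaFinite μ] [SMulInvariantMeasure Γ M μ]
    (X : Set M) (hXmeas : MeasurableSet X) (hX : IsFundamentalDomain Γ X μ)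
    {I : Type*} (F : I → Set M) (hFmeas : ∀ i, MeasurableSet (F i)) :
    (∀ (g h : Γ) (i j : I), (g, i) ≠ (h, j) → μ ((g • F i) ∩ (h • F j)) = 0) ↔
      ∃ Xi : I → Set M,
        (∀ i, MeasurableSet (Xi i)) ∧
        (∀ i, Xi i ⊆ X) ∧
        (Pairwise fun i j => μ (Xi i ∩ Xi j) = 0) ∧
        (∀ i, GammaEquiv Γ μ (F i) (Xi i)) :=
  packs_iff_equiv_subsets_of_fundamentalDomain_general hmeas μ X hXmeas hX F hFmeas
end

section
/- Consider two commuting measure-preserving actions of countable discrete groups Γ (acting on the left) and Λ (acting on the right) on a σ-finite measure space (M, B, m), with fundamental domains X for Γ and Y for Λ, both of finite positive measure. If there exist k fundamental domains F_1, …, F_k for Λ such that the family {F_1, …, F_k} packs by Γ, then for every measurable set A that is invariant under both Γ and Λ, one has m(A ∩ X) ≥ k · m(A ∩ Y). -/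
open MeasureTheory Set Pointwise ENNReal Function

/-!
Restricting `μ` to a set `A` that is a.e. invariant under both actions gives a measure that is
still invariant under both, and fundamental domains for `μ` remain fundamental domains for it.
Any two fundamental domains of `Λ` then have the same measure, so each `F i` has measure
`μ (A ∩ Y)`; and since the `Γ`-translates of all the `F i` are a.e. disjoint, cutting them by the
`Γ`-fundamental domain `X` fits `k` copies of this measure inside `X`.
-/

namespace MeasureTheory

variable {G α : Type*} [Group G] [MulAction G α] [MeasurableSpace α] {μ : Measure α}
  [MeasurableConstSMul G α] [SMulInvariantMeasure G α μ]

theorem smulInvariantMeasure_restrict_of_smul_ae_eq {A : Set α}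
    (hA : ∀ g : G, (g • A : Set α) =ᵐ[μ] A) : SMulInvariantMeasure G α (μ.restrict A) := by
  refine ⟨fun g s hs => ?_⟩
  rw [Measure.restrict_apply (hs.preimage (measurable_const_smul g)), Measure.restrict_apply hs,
    preimage_smul, measure_inv_smul_inter]
  exact measure_congr ((ae_eq_refl s).inter (hA g))

theorem IsFundamentalDomain.tsum_measure_le_of_pairwise_aedisjoint [Countable G] {ι : Type*}
    [Countable ι] {s : Set α} {t : ι → Set α} (hs : IsFundamentalDomain G s μ)
    (ht : ∀ i, NullMeasurableSet (t i) μ)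
    (hd : Pairwise (AEDisjoint μ on fun p : G × ι => p.1 • t p.2)) :
    ∑' i, μ (t i) ≤ μ s :=
  calc ∑' i, μ (t i) = ∑' i, ∑' g : G, μ (g • t i ∩ s) := tsum_congr fun i => hs.measure_eq_tsum _
    _ = ∑' p : G × ι, μ (p.1 • t p.2 ∩ s) := by
        rw [ENNReal.tsum_comm, ENNReal.tsum_prod']
    _ = μ (⋃ p : G × ι, p.1 • t p.2 ∩ s) := (measure_iUnion₀
        (fun p q hpq => (hd hpq).mono inter_subset_left inter_subset_left)
        fun p => ((ht p.2).smul p.1).inter hs.nullMeasurableSet).symm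
    _ ≤ μ s := measure_mono (iUnion_subset fun _ => inter_subset_right)

end MeasureTheory

theorem measure_inter_ge_of_packing_fundamentalDomains_general
    {M : Type*} [MeasurableSpace M]
    {Γ : Type*} [Group Γ] [Countable Γ] [MulAction Γ M]
    {Λ : Type*} [Group Λ] [Countable Λ] [MulAction Λ M]
    (hmeasΓ : ∀ γ : Γ, Measurable fun x : M => γ • x)
    (hmeasΛ : ∀ l : Λ, Measurable fun x : M => l • x)
    (μ : Measure M)
    [SMulInvariantMeasure Γ M μ] [SMulInvariantMeasure Λ M μ]
    (X Y : Set M)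
    (hX : IsFundamentalDomain Γ X μ) (hY : IsFundamentalDomain Λ Y μ)
    (k : ℕ) (F : Fin k → Set M)
    (hFfund : ∀ i, IsFundamentalDomain Λ (F i) μ)
    (hpack : ∀ (g h : Γ) (i j : Fin k), (g, i) ≠ (h, j) → μ ((g • F i) ∩ (h • F j)) = 0) :
    ∀ A : Set M, MeasurableSet A →
      (∀ γ : Γ, μ (symmDiff (γ • A) A) = 0) →
      (∀ l : Λ, μ (symmDiff (l • A) A) = 0) →
      (k : ℝ≥0∞) * μ (A ∩ Y) ≤ μ (A ∩ X) := by
  intro A hA hAΓ hAΛ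
  have : MeasurableConstSMul Γ M := ⟨hmeasΓ⟩
  have : MeasurableConstSMul Λ M := ⟨hmeasΛ⟩
  set ν := μ.restrict A
  have hνμ : ν ≪ μ := Measure.restrict_le_self.absolutelyContinuous
  have : SMulInvariantMeasure Γ M ν :=
    smulInvariantMeasure_restrict_of_smul_ae_eq fun γ => measure_symmDiff_eq_zero_iff.1 (hAΓ γ)
  have : SMulInvariantMeasure Λ M ν :=
    smulInvariantMeasure_restrict_of_smul_ae_eq fun l => measure_symmDiff_eq_zero_iff.1 (hAΛ l)
  have hFY : ∀ i, ν (F i) = ν Y := fun i => ((hFfund i).mono hνμ).measure_eq (hY.mono hνμ)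
  have hpackν : Pairwise (AEDisjoint ν on fun p : Γ × Fin k => p.1 • F p.2) :=
    fun p q hpq => hνμ (hpack p.1 q.1 p.2 q.2 hpq)
  calc (k : ℝ≥0∞) * μ (A ∩ Y) = ∑' i, ν (F i) := by
        simp [ν, hFY, tsum_fintype, Measure.restrict_apply' hA, inter_comm]
    _ ≤ ν X := (hX.mono hνμ).tsum_measure_le_of_pairwise_aedisjoint
        (fun i => (hFfund i).nullMeasurableSet.mono_ac hνμ) hpackν
    _ = μ (A ∩ X) := by rw [Measure.restrict_apply' hA, inter_comm]

/-- If there are `k` fundamental domains `F 1, …, F k` for `Λ` whose family packs by `Γ`,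
then `μ (A ∩ X) ≥ k • μ (A ∩ Y)` for every set `A` invariant under both commuting actions. -/
theorem measure_inter_ge_of_packing_fundamentalDomains
    {M : Type*} [MeasurableSpace M]
    {Γ : Type*} [Group Γ] [Countable Γ] [MulAction Γ M]
    {Λ : Type*} [Group Λ] [Countable Λ] [MulAction Λ M]
    (hmeasΓ : ∀ γ : Γ, Measurable fun x : M => γ • x)
    (hmeasΛ : ∀ l : Λ, Measurable fun x : M => l • x)
    (μ : Measure M) [SigmaFinite μ]
    [SMulInvariantMeasure Γ M μ] [SMulInvariantMeasure Λ M μ]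
    (hcomm : ∀ (γ : Γ) (l : Λ) (x : M), γ • (l • x) = l • (γ • x))
    (X Y : Set M) (hXmeas : MeasurableSet X) (hYmeas : MeasurableSet Y)
    (hX : IsFundamentalDomain Γ X μ) (hY : IsFundamentalDomain Λ Y μ)
    (hX0 : 0 < μ X) (hXfin : μ X ≠ ⊤) (hY0 : 0 < μ Y) (hYfin : μ Y ≠ ⊤)
    (k : ℕ) (hk : 1 ≤ k) (F : Fin k → Set M)
    (hFmeas : ∀ i, MeasurableSet (F i))
    (hFfund : ∀ i, IsFundamentalDomain Λ (F i) μ)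
    (hpack : ∀ (g h : Γ) (i j : Fin k), (g, i) ≠ (h, j) → μ ((g • F i) ∩ (h • F j)) = 0) :
    ∀ A : Set M, MeasurableSet A →
      (∀ γ : Γ, μ (symmDiff (γ • A) A) = 0) →
      (∀ l : Λ, μ (symmDiff (l • A) A) = 0) →
      (k : ℝ≥0∞) * μ (A ∩ Y) ≤ μ (A ∩ X) :=
  measure_inter_ge_of_packing_fundamentalDomains_general hmeasΓ hmeasΛ μ X Y hX hY k F hFfund hpack
end

section
/- Consider two commuting measure-preserving actions of countable discrete groups Γ and Λ on a σ-finite measure space (M, B, m), with fundamental domains X for Γ and Y for Λ of finite positive measure. If for every measurable set A invariant under both Γ and Λ one has m(A ∩ X) ≥ k · m(A ∩ Y) (k ≥ 1 an integer), then there exist k fundamental domains F_1, …, F_k for Λ such that the family {F_1, …, F_k} packs by Γ. -/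
/-!
Greedy matching. Enumerate the triples `(γ, ℓ, i) ∈ Γ × Λ × Fin k` and, step by step, match the
still unmatched part of the `i`-th copy of `Y` with the still unmatched part of `X` along
`x ↦ γ • ℓ • x`. Since every move is tried, no point left over in a copy of `Y` can be moved into
the leftover of `X`, so the `Γ × Λ`-saturation `A` of the leftovers of `Y` misses the leftover of
`X`. Inside `A` the matched pieces give `μ (A ∩ X) ≤ ∑ i, μ (A ∩ Y \ leftover i)`, while the
hypothesis gives `k * μ (A ∩ Y) ≤ μ (A ∩ X)`; as `μ Y < ∞`, the leftovers are null. Moving the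
pieces of the `i`-th copy back by their `ℓ` gives a `Λ`-fundamental domain `F i`, and moving them
by `γ • ℓ` gives pairwise disjoint subsets of `X`, which is why the `F i` pack by `Γ`.
-/

open MeasureTheory Set Pointwise ENNReal Function

section Exhaustion

variable {α : Type*} {s t : ℕ → Set α}

theorem pairwise_disjoint_of_succ_eq_sdiff (hs : ∀ n, s (n + 1) = s n \ t n)
    (ht : ∀ n, t n ⊆ s n) : Pairwise (Disjoint on t) := by
  have anti : Antitone s := antitone_nat_of_succ_le fun n => (hs n).symm ▸ sdiff_subset
  refine (pairwise_disjoint_on t).2 fun n m hnm => ?_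
  have : t m ⊆ s n \ t n := hs n ▸ (ht m).trans (anti hnm)
  exact disjoint_sdiff_right.mono_right this

theorem sdiff_iInter_eq_iUnion_of_succ_eq_sdiff (hs : ∀ n, s (n + 1) = s n \ t n)
    (ht : ∀ n, t n ⊆ s n) : s 0 \ ⋂ n, s n = ⋃ n, t n := by
  have anti : Antitone s := antitone_nat_of_succ_le fun n => (hs n).symm ▸ sdiff_subset
  refine Subset.antisymm ?_
    (iUnion_subset fun n => subset_sdiff.2 ⟨(ht n).trans (anti n.zero_le), ?_⟩)
  · rintro x ⟨hx0, hx⟩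
    obtain ⟨N, hN⟩ : ∃ N, x ∉ s N := by simpa using hx
    induction N with
    | zero => exact absurd hx0 hN
    | succ N ih =>
      by_cases hxN : x ∈ s N
      · rw [hs] at hN
        exact mem_iUnion.2 ⟨N, not_not.1 fun hxt => hN ⟨hxN, hxt⟩⟩
      · exact ih hxN
  · have : ⋂ n, s n ⊆ s n \ t n := hs n ▸ iInter_subset s (n + 1)
    exact disjoint_sdiff_right.mono_right this

end Exhaustion

section Saturation

def jointSaturation (Γ Λ : Type*) {M : Type*} [SMul Γ M] [SMul Λ M] (U : Set M) : Set M :=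
  ⋃ (γ : Γ) (ℓ : Λ), γ • ℓ • U

variable {Γ Λ M : Type*} [Group Γ] [MulAction Γ M] [Group Λ] [MulAction Λ M]

theorem subset_jointSaturation (U : Set M) : U ⊆ jointSaturation Γ Λ U :=
  subset_iUnion₂_of_subset 1 1 (by rw [one_smul, one_smul])

theorem smul_jointSaturation_left (g : Γ) (U : Set M) :
    g • jointSaturation Γ Λ U = jointSaturation Γ Λ U := by
  simp only [jointSaturation, smul_set_iUnion, smul_smul]
  exact (mul_left_surjective g).iUnion_comp fun γ => ⋃ ℓ : Λ, γ • ℓ • U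

theorem smul_jointSaturation_right [SMulCommClass Γ Λ M] (l : Λ) (U : Set M) :
    l • jointSaturation Γ Λ U = jointSaturation Γ Λ U := by
  simp only [jointSaturation, smul_set_iUnion, ← smul_comm _ l, smul_smul]
  exact iUnion_congr fun γ => (mul_left_surjective l).iUnion_comp fun ℓ => γ • ℓ • U

theorem MeasurableSet.jointSaturation [MeasurableSpace M] [Countable Γ] [Countable Λ]
    [MeasurableConstSMul Γ M] [MeasurableConstSMul Λ M] {U : Set M} (hU : MeasurableSet U) :
    MeasurableSet (jointSaturation Γ Λ U) :=
  .iUnion fun _ => .iUnion fun _ => (hU.const_smul _).const_smul _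

end Saturation

theorem MeasureTheory.smulInvariantMeasure_restrict {G α : Type*} [Group G] [MulAction G α]
    [MeasurableSpace α] {μ : Measure α} [SMulInvariantMeasure G α μ] {A : Set α}
    (hA : MeasurableSet A) (hAG : ∀ g : G, g • A = A) : SMulInvariantMeasure G α (μ.restrict A) :=
  ⟨fun g s _ => by
    have : (g • ·) ⁻¹' s ∩ A = g⁻¹ • (s ∩ A) := by rw [smul_set_inter, hAG, preimage_smul]
    rw [Measure.restrict_apply' hA, Measure.restrict_apply' hA, this, measure_smul]⟩

namespace MeasureTheory.IsFundamentalDomain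

variable {G α β : Type*} [Group G] [MulAction G α] [MeasurableSpace α] {μ : Measure α}

theorem aedisjoint_smul_of_pairwise_disjoint {X : Set α} (hX : IsFundamentalDomain G X μ)
    {Q : β → Set α} (hQX : ∀ b, Q b ⊆ X) (hQ : Pairwise (Disjoint on Q)) {g h : G} {b c : β}
    (hne : (g, b) ≠ (h, c)) : AEDisjoint μ (g • Q b) (h • Q c) := by
  obtain hgh | rfl := ne_or_eq g h
  · exact (hX.aedisjoint hgh).mono (smul_set_mono (hQX b)) (smul_set_mono (hQX c))
  · have hbc : b ≠ c := fun hbc => hne (hbc ▸ rfl)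
    exact (disjoint_smul_set.2 (hQ hbc)).aedisjoint

theorem iUnion_smul [Countable G] [Countable β] [MeasurableConstSMul G α]
    [SMulInvariantMeasure G α μ] {Y : Set α} (hY : IsFundamentalDomain G Y μ) {P : β → Set α}
    (hPm : ∀ b, MeasurableSet (P b)) (hPY : ∀ b, P b ⊆ Y) (hP : Pairwise (Disjoint on P))
    (hcov : μ (Y \ ⋃ b, P b) = 0) (a : β → G) : IsFundamentalDomain G (⋃ b, a b • P b) μ where
  nullMeasurableSet := (MeasurableSet.iUnion fun b => (hPm b).const_smul (a b)).nullMeasurableSet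
  ae_covers := by
    have hgood : ∀ᵐ x ∂μ, ∀ g : G, g • x ∉ Y \ ⋃ b, P b :=
      ae_all_iff.2 fun g => measure_eq_zero_iff_ae_notMem.1 (measure_preimage_smul_null hcov g)
    filter_upwards [hY.ae_covers, hgood] with x ⟨g, hg⟩ hx
    obtain ⟨b, hb⟩ := mem_iUnion.1 (not_not.1 fun h => hx g ⟨hg, h⟩)
    exact ⟨a b * g, mem_iUnion.2 ⟨b, by rw [mul_smul]; exact smul_mem_smul_set hb⟩⟩
  aedisjoint g h hgh := by
    simp only [onFun, smul_set_iUnion, smul_smul]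
    refine AEDisjoint.iUnion_left_iff.2 fun b => AEDisjoint.iUnion_right_iff.2 fun c =>
      hY.aedisjoint_smul_of_pairwise_disjoint hPY hP ?_
    simp only [ne_eq, Prod.ext_iff, not_and]
    rintro hbc rfl
    exact hgh (mul_right_cancel hbc)

end MeasureTheory.IsFundamentalDomain

/-- Greedy matching of `X` with copies of `Y` indexed by `ι`: step `n` matches the unmatched part
of copy `label n` of `Y` with the unmatched part of `X` along `x ↦ γ n • ℓ n • x`. -/
structure GreedyMatching (Γ Λ ι M : Type*) where
  X : Set M
  Y : Set M
  γ : ℕ → Γ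
  ℓ : ℕ → Λ
  label : ℕ → ι

namespace GreedyMatching

variable {Γ Λ ι M : Type*}

def Exhaustive (D : GreedyMatching Γ Λ ι M) : Prop :=
  ∀ γ ℓ i, ∃ n, D.γ n = γ ∧ D.ℓ n = ℓ ∧ D.label n = i

theorem exists_exhaustive [Countable Γ] [Countable Λ] [Countable ι] [Nonempty Γ] [Nonempty Λ]
    [Nonempty ι] (X Y : Set M) :
    ∃ D : GreedyMatching Γ Λ ι M, D.X = X ∧ D.Y = Y ∧ D.Exhaustive := by
  obtain ⟨f, hf⟩ := exists_surjective_nat (Γ × Λ × ι)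
  refine ⟨⟨X, Y, fun n => (f n).1, fun n => (f n).2.1, fun n => (f n).2.2⟩, rfl, rfl,
    fun γ ℓ i => ?_⟩
  obtain ⟨n, hn⟩ := hf (γ, ℓ, i)
  exact ⟨n, by simp [hn]⟩

section

variable [SMul Γ M] [SMul Λ M] (D : GreedyMatching Γ Λ ι M)

def state : ℕ → (ι → Set M) × Set M
  | 0 => (fun _ => D.Y, D.X)
  | n + 1 =>
    let piece i := (state n).1 i ∩ {x | D.label n = i ∧ D.γ n • D.ℓ n • x ∈ (state n).2}
    (fun i => (state n).1 i \ piece i, (state n).2 \ D.γ n • D.ℓ n • piece (D.label n))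

def freeY (n : ℕ) (i : ι) : Set M := (D.state n).1 i

def freeX (n : ℕ) : Set M := (D.state n).2

def pieceY (n : ℕ) (i : ι) : Set M :=
  D.freeY n i ∩ {x | D.label n = i ∧ D.γ n • D.ℓ n • x ∈ D.freeX n}

def pieceX (n : ℕ) (i : ι) : Set M := D.γ n • D.ℓ n • D.pieceY n i

def residueY (i : ι) : Set M := ⋂ n, D.freeY n i

def residueX : Set M := ⋂ n, D.freeX n

theorem freeY_succ (n : ℕ) (i : ι) : D.freeY (n + 1) i = D.freeY n i \ D.pieceY n i := rfl

theorem freeX_succ (n : ℕ) : D.freeX (n + 1) = D.freeX n \ D.pieceX n (D.label n) := rfl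

theorem pieceY_subset_freeY (n : ℕ) (i : ι) : D.pieceY n i ⊆ D.freeY n i := inter_subset_left

theorem pieceX_subset_freeX (n : ℕ) (i : ι) : D.pieceX n i ⊆ D.freeX n := by
  rintro _ ⟨_, ⟨y, hy, rfl⟩, rfl⟩
  exact hy.2.2

theorem pieceY_eq_empty_of_ne {n : ℕ} {i : ι} (h : D.label n ≠ i) : D.pieceY n i = ∅ :=
  eq_empty_of_forall_notMem fun _ hx => h hx.2.1

theorem pieceX_subset_pieceX_label (n : ℕ) (i : ι) : D.pieceX n i ⊆ D.pieceX n (D.label n) := by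
  obtain rfl | h := eq_or_ne (D.label n) i
  · exact subset_rfl
  · simp [pieceX, D.pieceY_eq_empty_of_ne h]

theorem pairwise_disjoint_pieceY (i : ι) : Pairwise (Disjoint on fun n => D.pieceY n i) :=
  pairwise_disjoint_of_succ_eq_sdiff (D.freeY_succ · i) (D.pieceY_subset_freeY · i)

theorem pairwise_disjoint_pieceX : Pairwise (Disjoint on fun p : ℕ × ι => D.pieceX p.1 p.2) := by
  rintro ⟨n, i⟩ ⟨m, j⟩ hne
  obtain hnm | rfl := ne_or_eq n m
  · exact (pairwise_disjoint_of_succ_eq_sdiff D.freeX_succ (fun n => D.pieceX_subset_freeX n _)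
      hnm).mono (D.pieceX_subset_pieceX_label n i) (D.pieceX_subset_pieceX_label m j)
  · have hij : i ≠ j := fun h => hne (by rw [h])
    obtain hi | hj : D.label n ≠ i ∨ D.label n ≠ j := by grind
    · simp [onFun, pieceX, D.pieceY_eq_empty_of_ne hi]
    · simp [onFun, pieceX, D.pieceY_eq_empty_of_ne hj]

theorem sdiff_residueY (i : ι) : D.Y \ D.residueY i = ⋃ n, D.pieceY n i :=
  sdiff_iInter_eq_iUnion_of_succ_eq_sdiff (D.freeY_succ · i) (D.pieceY_subset_freeY · i)

theorem sdiff_residueX : D.X \ D.residueX = ⋃ n, D.pieceX n (D.label n) :=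
  sdiff_iInter_eq_iUnion_of_succ_eq_sdiff D.freeX_succ (fun n => D.pieceX_subset_freeX n _)

theorem residueY_subset_Y (i : ι) : D.residueY i ⊆ D.Y := iInter_subset _ 0

theorem pieceY_subset_Y (n : ℕ) (i : ι) : D.pieceY n i ⊆ D.Y :=
  (subset_iUnion (D.pieceY · i) n).trans ((D.sdiff_residueY i).symm ▸ sdiff_subset)

theorem pieceX_subset_X (n : ℕ) (i : ι) : D.pieceX n i ⊆ D.X :=
  (D.pieceX_subset_pieceX_label n i).trans <|
    (subset_iUnion (fun m => D.pieceX m (D.label m)) n).trans (D.sdiff_residueX.symm ▸ sdiff_subset)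

theorem Exhaustive.disjoint_residueX (hD : D.Exhaustive) :
    Disjoint (jointSaturation Γ Λ (⋃ i, D.residueY i)) D.residueX := by
  simp only [jointSaturation, Set.disjoint_left, mem_iUnion, mem_smul_set]
  rintro _ ⟨γ, ℓ, _, ⟨y, ⟨i, hy⟩, rfl⟩, rfl⟩ hx
  obtain ⟨n, rfl, rfl, rfl⟩ := hD γ ℓ i
  exact (mem_iInter.1 hy (n + 1)).2 ⟨mem_iInter.1 hy n, rfl, mem_iInter.1 hx n⟩

end

theorem ℓ_smul_pieceY [Group Γ] [MulAction Γ M] [SMul Λ M]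
    (D : GreedyMatching Γ Λ ι M) (n : ℕ) (i : ι) :
    D.ℓ n • D.pieceY n i = (D.γ n)⁻¹ • D.pieceX n i :=
  (inv_smul_smul _ _).symm

section

variable [Group Γ] [MulAction Γ M] [Group Λ] [MulAction Λ M]
  [MeasurableSpace M] [MeasurableConstSMul Γ M] [MeasurableConstSMul Λ M]
  (D : GreedyMatching Γ Λ ι M)

theorem measurableSet_pieceY_of {n : ℕ} {i : ι} (hfreeY : MeasurableSet (D.freeY n i))
    (hfreeX : MeasurableSet (D.freeX n)) : MeasurableSet (D.pieceY n i) :=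
  hfreeY.inter ((MeasurableSet.const _).inter
    ((measurable_const_smul _).comp (measurable_const_smul _) hfreeX))

theorem measurableSet_freeY_freeX (hX : MeasurableSet D.X) (hY : MeasurableSet D.Y) (n : ℕ) :
    (∀ i, MeasurableSet (D.freeY n i)) ∧ MeasurableSet (D.freeX n) := by
  induction n with
  | zero => exact ⟨fun _ => hY, hX⟩
  | succ n ih =>
    have hpiece i : MeasurableSet (D.pieceY n i) := D.measurableSet_pieceY_of (ih.1 i) ih.2
    exact ⟨fun i => (ih.1 i).diff (hpiece i), ih.2.diff (((hpiece _).const_smul _).const_smul _)⟩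

theorem measurableSet_pieceY (hX : MeasurableSet D.X) (hY : MeasurableSet D.Y) (n : ℕ) (i : ι) :
    MeasurableSet (D.pieceY n i) :=
  D.measurableSet_pieceY_of ((D.measurableSet_freeY_freeX hX hY n).1 i)
    (D.measurableSet_freeY_freeX hX hY n).2

theorem measurableSet_residueY (hX : MeasurableSet D.X) (hY : MeasurableSet D.Y) (i : ι) :
    MeasurableSet (D.residueY i) :=
  .iInter fun n => (D.measurableSet_freeY_freeX hX hY n).1 i

theorem measure_sdiff_residueX_le [Fintype ι] (ν : Measure M) [SMulInvariantMeasure Γ M ν]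
    [SMulInvariantMeasure Λ M ν] (hX : MeasurableSet D.X) (hY : MeasurableSet D.Y) :
    ν (D.X \ D.residueX) ≤ ∑ i, ν (D.Y \ D.residueY i) := by
  have hlabel n : ν (D.pieceX n (D.label n)) = ∑ i, ν (D.pieceY n i) := by
    rw [pieceX, measure_smul, measure_smul, Finset.sum_eq_single (D.label n)
      (fun i _ hi => by rw [D.pieceY_eq_empty_of_ne hi.symm, measure_empty])
      (fun h => absurd (Finset.mem_univ _) h)]
  calc ν (D.X \ D.residueX) ≤ ∑' n, ν (D.pieceX n (D.label n)) :=
        D.sdiff_residueX ▸ measure_iUnion_le _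
    _ = ∑ i, ∑' n, ν (D.pieceY n i) := by
      rw [tsum_congr hlabel, Summable.tsum_finsetSum fun _ _ => ENNReal.summable]
    _ = ∑ i, ν (D.Y \ D.residueY i) := by
      simp only [D.sdiff_residueY,
        measure_iUnion (D.pairwise_disjoint_pieceY _) (D.measurableSet_pieceY hX hY · _)]

theorem measure_residueY_eq_zero [Countable Γ] [Countable Λ] [Fintype ι] [SMulCommClass Γ Λ M]
    (μ : Measure M) [SMulInvariantMeasure Γ M μ] [SMulInvariantMeasure Λ M μ]
    (hX : MeasurableSet D.X) (hY : MeasurableSet D.Y) (hYfin : μ D.Y ≠ ∞) (hD : D.Exhaustive)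
    (h : ∀ A, MeasurableSet A → (∀ γ : Γ, γ • A = A) → (∀ ℓ : Λ, ℓ • A = A) →
      (Fintype.card ι : ℝ≥0∞) * μ (A ∩ D.Y) ≤ μ (A ∩ D.X)) (i : ι) :
    μ (D.residueY i) = 0 := by
  set A := jointSaturation Γ Λ (⋃ j, D.residueY j)
  have hA : MeasurableSet A :=
    (MeasurableSet.iUnion (D.measurableSet_residueY hX hY)).jointSaturation
  have hAΓ (γ : Γ) : γ • A = A := smul_jointSaturation_left γ _
  have hAΛ (ℓ : Λ) : ℓ • A = A := smul_jointSaturation_right ℓ _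
  set ν := μ.restrict A
  have : SMulInvariantMeasure Γ M ν := smulInvariantMeasure_restrict hA hAΓ
  have : SMulInvariantMeasure Λ M ν := smulInvariantMeasure_restrict hA hAΛ
  have hresA j : D.residueY j ⊆ A := (subset_iUnion _ j).trans (subset_jointSaturation _)
  have hsplit j : ν D.Y = ν (D.Y \ D.residueY j) + ν (D.residueY j) := by
    rw [← measure_sdiff_add_inter _ (D.measurableSet_residueY hX hY j),
      inter_eq_right.2 (D.residueY_subset_Y j)]
  have hfin : ∑ j, ν (D.Y \ D.residueY j) ≠ ∞ := ENNReal.sum_ne_top.2 fun j _ =>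
    ne_top_of_le_ne_top hYfin ((Measure.restrict_le_self _).trans (measure_mono sdiff_subset))
  have hνX : ν D.residueX = 0 := by
    rw [Measure.restrict_apply' hA, hD.disjoint_residueX.symm.inter_eq, measure_empty]
  have hsum : ∑ j, ν (D.Y \ D.residueY j) + ∑ j, ν (D.residueY j)
      ≤ ∑ j, ν (D.Y \ D.residueY j) + 0 :=
    calc _ = ∑ _j : ι, ν D.Y := by rw [← Finset.sum_add_distrib]; simp only [← hsplit]
      _ = Fintype.card ι * ν D.Y := by simp
      _ ≤ ν D.X := by
        rw [Measure.restrict_apply' hA, Measure.restrict_apply' hA, inter_comm D.Y, inter_comm D.X]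
        exact h A hA hAΓ hAΛ
      _ = ν (D.X \ D.residueX) := (measure_sdiff_null hνX).symm
      _ ≤ _ := by rw [add_zero]; exact D.measure_sdiff_residueX_le ν hX hY
  have hνi : ν (D.residueY i) = 0 := Finset.sum_eq_zero_iff.1
    (nonpos_iff_eq_zero.1 (ENNReal.le_of_add_le_add_left hfin hsum)) i (Finset.mem_univ i)
  rwa [Measure.restrict_eq_self _ (hresA i)] at hνi

end

end GreedyMatching

theorem exists_packing_fundamentalDomains_of_measure_inter_ge_general
    {M : Type*} [MeasurableSpace M]
    {Γ : Type*} [Group Γ] [Countable Γ] [MulAction Γ M]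
    {Λ : Type*} [Group Λ] [Countable Λ] [MulAction Λ M]
    (hmeasΓ : ∀ γ : Γ, Measurable fun x : M => γ • x)
    (hmeasΛ : ∀ l : Λ, Measurable fun x : M => l • x)
    (μ : Measure M)
    [SMulInvariantMeasure Γ M μ] [SMulInvariantMeasure Λ M μ]
    (hcomm : ∀ (γ : Γ) (l : Λ) (x : M), γ • (l • x) = l • (γ • x))
    (X Y : Set M) (hXmeas : MeasurableSet X) (hYmeas : MeasurableSet Y)
    (hX : IsFundamentalDomain Γ X μ) (hY : IsFundamentalDomain Λ Y μ)
    (hYfin : μ Y ≠ ⊤)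
    (k : ℕ) (hk : 1 ≤ k)
    (hineq : ∀ A : Set M, MeasurableSet A →
      (∀ γ : Γ, μ (symmDiff (γ • A) A) = 0) →
      (∀ l : Λ, μ (symmDiff (l • A) A) = 0) →
      (k : ℝ≥0∞) * μ (A ∩ Y) ≤ μ (A ∩ X)) :
    ∃ F : Fin k → Set M,
      (∀ i, MeasurableSet (F i)) ∧
      (∀ i, IsFundamentalDomain Λ (F i) μ) ∧
      (∀ (g h : Γ) (i j : Fin k), (g, i) ≠ (h, j) → μ ((g • F i) ∩ (h • F j)) = 0) := by
  have : MeasurableConstSMul Γ M := ⟨hmeasΓ⟩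
  have : MeasurableConstSMul Λ M := ⟨hmeasΛ⟩
  have : SMulCommClass Γ Λ M := ⟨hcomm⟩
  have : Nonempty (Fin k) := ⟨⟨0, hk⟩⟩
  obtain ⟨D, rfl, rfl, hD⟩ := GreedyMatching.exists_exhaustive (Γ := Γ) (Λ := Λ) (ι := Fin k) X Y
  have hresidue := D.measure_residueY_eq_zero μ hXmeas hYmeas hYfin hD fun A hA hAΓ hAΛ => by
    simpa using hineq A hA (fun γ => by simp [hAΓ γ]) (fun l => by simp [hAΛ l])
  refine ⟨fun i => ⋃ n, D.ℓ n • D.pieceY n i,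
    fun i => .iUnion fun n => (D.measurableSet_pieceY hXmeas hYmeas n i).const_smul _,
    fun i => hY.iUnion_smul (D.measurableSet_pieceY hXmeas hYmeas · i) (D.pieceY_subset_Y · i)
      (D.pairwise_disjoint_pieceY i) ?_ D.ℓ, fun g h i j hne => ?_⟩
  · rw [← D.sdiff_residueY, sdiff_sdiff_right_self]
    exact measure_mono_null inter_subset_right (hresidue i)
  · simp only [smul_set_iUnion, D.ℓ_smul_pieceY, smul_smul]
    refine AEDisjoint.iUnion_left_iff.2 fun n => AEDisjoint.iUnion_right_iff.2 fun m =>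
      hX.aedisjoint_smul_of_pairwise_disjoint (Q := fun p : ℕ × Fin k => D.pieceX p.1 p.2)
        (b := (n, i)) (c := (m, j)) (fun p => D.pieceX_subset_X p.1 p.2)
        D.pairwise_disjoint_pieceX ?_
    simp only [ne_eq, Prod.ext_iff, not_and] at hne ⊢
    rintro hgh rfl rfl
    exact hne (mul_right_cancel hgh) rfl

/-- If `μ (A ∩ X) ≥ k · μ (A ∩ Y)` for every jointly invariant set `A`, then there exist `k`
fundamental domains for `Λ` whose family packs by `Γ`. -/
theorem exists_packing_fundamentalDomains_of_measure_inter_ge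
    {M : Type*} [MeasurableSpace M]
    {Γ : Type*} [Group Γ] [Countable Γ] [MulAction Γ M]
    {Λ : Type*} [Group Λ] [Countable Λ] [MulAction Λ M]
    (hmeasΓ : ∀ γ : Γ, Measurable fun x : M => γ • x)
    (hmeasΛ : ∀ l : Λ, Measurable fun x : M => l • x)
    (μ : Measure M) [SigmaFinite μ]
    [SMulInvariantMeasure Γ M μ] [SMulInvariantMeasure Λ M μ]
    (hcomm : ∀ (γ : Γ) (l : Λ) (x : M), γ • (l • x) = l • (γ • x))
    (X Y : Set M) (hXmeas : MeasurableSet X) (hYmeas : MeasurableSet Y)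
    (hX : IsFundamentalDomain Γ X μ) (hY : IsFundamentalDomain Λ Y μ)
    (hX0 : 0 < μ X) (hXfin : μ X ≠ ⊤) (hY0 : 0 < μ Y) (hYfin : μ Y ≠ ⊤)
    (k : ℕ) (hk : 1 ≤ k)
    (hineq : ∀ A : Set M, MeasurableSet A →
      (∀ γ : Γ, μ (symmDiff (γ • A) A) = 0) →
      (∀ l : Λ, μ (symmDiff (l • A) A) = 0) →
      (k : ℝ≥0∞) * μ (A ∩ Y) ≤ μ (A ∩ X)) :
    ∃ F : Fin k → Set M,
      (∀ i, MeasurableSet (F i)) ∧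
      (∀ i, IsFundamentalDomain Λ (F i) μ) ∧
      (∀ (g h : Γ) (i j : Fin k), (g, i) ≠ (h, j) → μ ((g • F i) ∩ (h • F j)) = 0) :=
  exists_packing_fundamentalDomains_of_measure_inter_ge_general hmeasΓ hmeasΛ μ hcomm X Y hXmeas
    hYmeas hX hY hYfin k hk hineq
end

section
/- Consider two commuting measure-preserving actions of countable discrete groups Γ and Λ on a σ-finite measure space (M, B, m), with fundamental domains X for Γ and Y for Λ, 0 < m(X), m(Y) < ∞. Then there exists a common fundamental domain F (simultaneously a fundamental domain for the Γ-action and for the Λ-action) if and only if m(A ∩ X) = m(A ∩ Y) for every measurable set A invariant under both Γ and Λ. -/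
/-!
Necessity: a set invariant under a countable group meets any two of its fundamental domains in
the same measure, so `μ (A ∩ X) = μ (A ∩ F) = μ (A ∩ Y)`.

Sufficiency: let `Γ × Λ` act jointly, enumerate it as `g 0, g 1, …`, and match `X` with `Y`
greedily: at step `n`, every still unmatched `x ∈ X` with `g n • x` a still unmatched point of `Y`
is matched to it. No element of the group carries the unmatched rest `P` of `X` into the unmatched
rest of `Y`, so the saturation `I` of `P` meets `Y` only in matched pieces. Matched pieces have
equal measure inside the invariant set `I`, hence `μ (I ∩ X) = μ (I ∩ Y) < ∞` forces `μ P = 0`,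
and symmetrically for `Y`. If `A n ⊆ X` is matched with `g n • A n ⊆ Y`, then
`F = ⋃ n, (g n).1 • A n = ⋃ n, (g n).2⁻¹ • g n • A n` is obtained by moving the pieces of an a.e.
partition of `X` by elements of `Γ`, and those of `Y` by elements of `Λ`; such a rearrangement of
a fundamental domain is again one.
-/

open MeasureTheory Set Pointwise ENNReal Function

section

variable {M G : Type*} [Group G] [MulAction G M]

namespace GreedyMatching

variable (g : ℕ → G) (X Y : Set M)

/-- The parts of `X` and `Y` still unmatched before step `n`; step `n` matches `x` with
`g n • x`. -/
def remainders : ℕ → Set M × Set M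
  | 0 => (X, Y)
  | n + 1 =>
    ((remainders n).1 \ (g n)⁻¹ • (remainders n).2,
      (remainders n).2 \ g n • (remainders n).1)

def piece (n : ℕ) : Set M := (remainders g X Y n).1 ∩ (g n)⁻¹ • (remainders g X Y n).2

variable {g X Y}

theorem antitone_remainders_fst : Antitone fun n => (remainders g X Y n).1 :=
  antitone_nat_of_succ_le fun _ => sdiff_subset

theorem antitone_remainders_snd : Antitone fun n => (remainders g X Y n).2 :=
  antitone_nat_of_succ_le fun _ => sdiff_subset

theorem smul_piece (n : ℕ) :
    g n • piece g X Y n = g n • (remainders g X Y n).1 ∩ (remainders g X Y n).2 := by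
  rw [piece, smul_set_inter, smul_inv_smul]

theorem piece_subset (n : ℕ) : piece g X Y n ⊆ X :=
  inter_subset_left.trans (antitone_remainders_fst (Nat.zero_le n))

theorem smul_piece_subset (n : ℕ) : g n • piece g X Y n ⊆ Y :=
  (smul_piece n).subset.trans <|
    inter_subset_right.trans (antitone_remainders_snd (Nat.zero_le n))

theorem pairwise_disjoint_piece : Pairwise (Disjoint on piece g X Y) := by
  refine (pairwise_disjoint_on _).2 fun m n hmn => ?_
  have hn : piece g X Y n ⊆ (remainders g X Y m).1 \ (g m)⁻¹ • (remainders g X Y m).2 :=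
    inter_subset_left.trans (antitone_remainders_fst hmn)
  exact (disjoint_sdiff_right.mono_left inter_subset_right).mono_right hn

theorem pairwise_disjoint_smul_piece : Pairwise (Disjoint on fun n => g n • piece g X Y n) := by
  refine (pairwise_disjoint_on _).2 fun m n hmn => ?_
  have hn : g n • piece g X Y n ⊆ (remainders g X Y m).2 \ g m • (remainders g X Y m).1 :=
    (smul_piece n).subset.trans (inter_subset_right.trans (antitone_remainders_snd hmn))
  rw [smul_piece]
  exact (disjoint_sdiff_right.mono_left inter_subset_left).mono_right hn

theorem diff_iUnion_piece_subset (n : ℕ) :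
    X \ ⋃ k, piece g X Y k ⊆ (remainders g X Y n).1 := by
  induction n with
  | zero => exact sdiff_subset
  | succ n ih =>
    intro x hx
    exact ⟨ih hx, fun hx' => hx.2 (mem_iUnion.2 ⟨n, ih hx, hx'⟩)⟩

theorem diff_iUnion_smul_piece_subset (n : ℕ) :
    Y \ ⋃ k, g k • piece g X Y k ⊆ (remainders g X Y n).2 := by
  induction n with
  | zero => exact sdiff_subset
  | succ n ih =>
    intro y hy
    exact ⟨ih hy, fun hy' => hy.2 (mem_iUnion.2 ⟨n, by rw [smul_piece]; exact ⟨hy', ih hy⟩⟩)⟩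

theorem smul_notMem_diff_iUnion_smul_piece (hg : Surjective g) {x : M}
    (hx : x ∈ X \ ⋃ n, piece g X Y n) (h : G) : h • x ∉ Y \ ⋃ n, g n • piece g X Y n := by
  intro hhx
  obtain ⟨n, rfl⟩ := hg h
  refine hx.2 (mem_iUnion.2 ⟨n, diff_iUnion_piece_subset n hx, ?_⟩)
  exact mem_inv_smul_set_iff.2 (diff_iUnion_smul_piece_subset n hhx)

theorem measurableSet_remainders [MeasurableSpace M] [MeasurableConstSMul G M]
    (hX : MeasurableSet X) (hY : MeasurableSet Y) (n : ℕ) :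
    MeasurableSet (remainders g X Y n).1 ∧ MeasurableSet (remainders g X Y n).2 := by
  induction n with
  | zero => exact ⟨hX, hY⟩
  | succ n ih => exact ⟨ih.1.diff (ih.2.const_smul _), ih.2.diff (ih.1.const_smul _)⟩

theorem measurableSet_piece [MeasurableSpace M] [MeasurableConstSMul G M]
    (hX : MeasurableSet X) (hY : MeasurableSet Y) (n : ℕ) : MeasurableSet (piece g X Y n) :=
  (measurableSet_remainders hX hY n).1.inter ((measurableSet_remainders hX hY n).2.const_smul _)

end GreedyMatching

namespace MeasureTheory

variable [MeasurableSpace M] {μ : Measure M}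

structure IsAEPartition {ι : Type*} (μ : Measure M) (s : Set M) (A : ι → Set M) : Prop where
  measurableSet : ∀ i, MeasurableSet (A i)
  subset : ∀ i, A i ⊆ s
  pairwise_disjoint : Pairwise (Disjoint on A)
  measure_diff_iUnion : μ (s \ ⋃ i, A i) = 0

variable [Countable G] [MeasurableConstSMul G M] [SMulInvariantMeasure G M μ]

namespace IsFundamentalDomain

theorem measure_inter_eq_of_ae_smul_eq {s t A : Set M} (hs : IsFundamentalDomain G s μ)
    (ht : IsFundamentalDomain G t μ) (hA : ∀ g : G, g • A =ᵐ[μ] A) :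
    μ (A ∩ s) = μ (A ∩ t) :=
  calc μ (A ∩ s) = ∑' g : G, μ (g • (A ∩ s) ∩ t) := ht.measure_eq_tsum _
    _ = ∑' g : G, μ (A ∩ t ∩ g • s) := by
        refine tsum_congr fun g => ?_
        have hg : (g • A ∩ g • s ∩ t : Set M) =ᵐ[μ] (A ∩ g • s ∩ t : Set M) :=
          ((hA g).inter (ae_eq_refl _)).inter (ae_eq_refl _)
        rw [smul_set_inter, measure_congr hg, inter_right_comm]
    _ = μ (A ∩ t) := (hs.measure_eq_tsum' _).symm

theorem iUnion_smul_s4 {ι : Type*} [Countable ι] {s : Set M} {A : ι → Set M}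
    (hs : IsFundamentalDomain G s μ) (hA : IsAEPartition μ s A) (g : ι → G) :
    IsFundamentalDomain G (⋃ i, g i • A i) μ where
  nullMeasurableSet :=
    (MeasurableSet.iUnion fun i => (hA.measurableSet i).const_smul (g i)).nullMeasurableSet
  ae_covers := by
    have hleft : ∀ᵐ x ∂μ, ∀ δ : G, δ • x ∉ s \ ⋃ i, A i := by
      refine ae_all_iff.2 fun δ => measure_eq_zero_iff_ae_notMem.1 ?_
      exact (measure_preimage_smul μ δ _).trans hA.measure_diff_iUnion
    filter_upwards [hs.ae_covers, hleft] with x ⟨δ, hδ⟩ hx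
    obtain ⟨i, hi⟩ := mem_iUnion.1 (not_not.1 fun h => hx δ ⟨hδ, h⟩)
    exact ⟨g i * δ, mem_iUnion.2 ⟨i, by rw [mul_smul]; exact smul_mem_smul_set hi⟩⟩
  aedisjoint γ γ' hne := by
    simp only [onFun, smul_set_iUnion, smul_smul, AEDisjoint.iUnion_left_iff,
      AEDisjoint.iUnion_right_iff]
    intro j i
    by_cases hg : γ * g i = γ' * g j
    · have hij : i ≠ j := by rintro rfl; exact hne (mul_right_cancel hg)
      rw [hg]
      exact (disjoint_smul_set.2 (hA.pairwise_disjoint hij)).aedisjoint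
    · exact (hs.aedisjoint hg).mono (smul_set_mono (hA.subset i)) (smul_set_mono (hA.subset j))

end IsFundamentalDomain

theorem measure_diff_iUnion_eq_zero_of_forall_smul_notMem {ι : Type*} [Countable ι]
    {X Y : Set M} {A : ι → Set M} {g : ι → G} (hX : MeasurableSet X) (hXfin : μ X ≠ ∞)
    (hXY : ∀ I, MeasurableSet I → (∀ h : G, h • I = I) → μ (I ∩ X) = μ (I ∩ Y))
    (hA : ∀ i, MeasurableSet (A i)) (hAX : ∀ i, A i ⊆ X) (hAd : Pairwise (Disjoint on A))
    (hmax : ∀ x ∈ X \ ⋃ i, A i, ∀ h : G, h • x ∉ Y \ ⋃ i, g i • A i) :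
    μ (X \ ⋃ i, A i) = 0 := by
  set P := X \ ⋃ i, A i
  set I := ⋃ h : G, h • P
  have hP : MeasurableSet P := hX.diff (.iUnion hA)
  have hI : MeasurableSet I := .iUnion fun h => hP.const_smul h
  have hIinv : ∀ h : G, h • I = I := fun h => by
    simp only [I, smul_set_iUnion, smul_smul]
    exact (Equiv.mulLeft h).surjective.iUnion_comp (· • P)
  have hPI : P ⊆ I := subset_iUnion_of_subset 1 (one_smul G P).superset
  have hIX : I ∩ X = (⋃ i, I ∩ A i) ∪ P := by
    rw [← inter_iUnion, ← inter_eq_right.2 hPI, ← inter_union_distrib_left,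
      union_sdiff_cancel (iUnion_subset hAX)]
  have hIY : I ∩ Y ⊆ ⋃ i, I ∩ g i • A i := by
    rintro x ⟨hxI, hxY⟩
    obtain ⟨h, hx⟩ := mem_iUnion.1 hxI
    have hx' := hmax _ (mem_smul_set_iff_inv_smul_mem.1 hx) h
    rw [smul_inv_smul] at hx'
    obtain ⟨i, hi⟩ := mem_iUnion.1 (not_not.1 fun h' => hx' ⟨hxY, h'⟩)
    exact mem_iUnion.2 ⟨i, hxI, hi⟩
  have hfin : μ (⋃ i, I ∩ A i) ≠ ∞ :=
    ne_top_of_le_ne_top hXfin <|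
      measure_mono (iUnion_subset fun i => inter_subset_right.trans (hAX i))
  have hAI : Pairwise (Disjoint on fun i => I ∩ A i) :=
    hAd.mono fun _ _ h => h.mono inter_subset_right inter_subset_right
  have key : μ (⋃ i, I ∩ A i) + μ P ≤ μ (⋃ i, I ∩ A i) + 0 :=
    calc μ (⋃ i, I ∩ A i) + μ P = μ (I ∩ X) := by
          rw [hIX, measure_union (disjoint_sdiff_right.mono_left
            (iUnion_mono fun i => inter_subset_right)) hP]
      _ = μ (I ∩ Y) := hXY I hI hIinv
      _ ≤ ∑' i, μ (I ∩ g i • A i) := (measure_mono hIY).trans (measure_iUnion_le _)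
      _ = ∑' i, μ (I ∩ A i) := tsum_congr fun i => by rw [← measure_inv_smul_inter, hIinv]
      _ = μ (⋃ i, I ∩ A i) + 0 := by
          rw [add_zero, measure_iUnion hAI fun i => hI.inter (hA i)]
  exact nonpos_iff_eq_zero.1 (ENNReal.le_of_add_le_add_left hfin key)

theorem exists_isAEPartition_smul_of_measure_inter_eq {X Y : Set M} (hX : MeasurableSet X)
    (hY : MeasurableSet Y) (hXfin : μ X ≠ ∞)
    (hXY : ∀ I, MeasurableSet I → (∀ h : G, h • I = I) → μ (I ∩ X) = μ (I ∩ Y)) :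
    ∃ (A : ℕ → Set M) (g : ℕ → G),
      IsAEPartition μ X A ∧ IsAEPartition μ Y fun n => g n • A n := by
  open GreedyMatching in
  obtain ⟨g, hg⟩ := exists_surjective_nat G
  have hYfin : μ Y ≠ ∞ := by
    rwa [← univ_inter Y, ← hXY univ .univ fun _ => smul_set_univ, univ_inter]
  have hA : ∀ n, MeasurableSet (piece g X Y n) := measurableSet_piece hX hY
  refine ⟨piece g X Y, g, ⟨hA, piece_subset, pairwise_disjoint_piece, ?_⟩,
    ⟨fun n => (hA n).const_smul _, smul_piece_subset, pairwise_disjoint_smul_piece, ?_⟩⟩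
  · exact measure_diff_iUnion_eq_zero_of_forall_smul_notMem hX hXfin hXY hA piece_subset
      pairwise_disjoint_piece fun x hx => smul_notMem_diff_iUnion_smul_piece hg hx
  · refine measure_diff_iUnion_eq_zero_of_forall_smul_notMem (g := fun n => (g n)⁻¹) hY hYfin
      (fun I hI hinv => (hXY I hI hinv).symm) (fun n => (hA n).const_smul _) smul_piece_subset
      pairwise_disjoint_smul_piece fun y hy h hhy => ?_
    simp only [inv_smul_smul] at hhy
    exact smul_notMem_diff_iUnion_smul_piece hg hhy h⁻¹ (by rwa [inv_smul_smul])

end MeasureTheory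

section ProdAction

variable {Γ Λ : Type*} [Group Γ] [Group Λ] [MulAction Γ M] [MulAction Λ M] [SMulCommClass Γ Λ M]

attribute [local instance] MulAction.prodOfSMulCommClass

theorem prod_smul_set (p : Γ × Λ) (s : Set M) : p • s = p.1 • p.2 • s :=
  (image_image (p.1 • ·) (p.2 • ·) s).symm

theorem measurableConstSMul_prod [MeasurableSpace M] [MeasurableConstSMul Γ M]
    [MeasurableConstSMul Λ M] : MeasurableConstSMul (Γ × Λ) M :=
  ⟨fun p => (measurable_const_smul p.1).comp (measurable_const_smul p.2)⟩

theorem smulInvariantMeasure_prod [MeasurableSpace M] (μ : Measure M)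
    [SMulInvariantMeasure Γ M μ] [SMulInvariantMeasure Λ M μ] :
    SMulInvariantMeasure (Γ × Λ) M μ :=
  ⟨fun p s _ => (measure_preimage_smul μ p.2 _).trans (measure_preimage_smul μ p.1 s)⟩

end ProdAction

end

theorem exists_common_fundamentalDomain_iff_general
    {M : Type*} [MeasurableSpace M]
    {Γ : Type*} [Group Γ] [Countable Γ] [MulAction Γ M]
    {Λ : Type*} [Group Λ] [Countable Λ] [MulAction Λ M]
    (hmeasΓ : ∀ γ : Γ, Measurable fun x : M => γ • x)
    (hmeasΛ : ∀ l : Λ, Measurable fun x : M => l • x)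
    (μ : Measure M)
    [SMulInvariantMeasure Γ M μ] [SMulInvariantMeasure Λ M μ]
    (hcomm : ∀ (γ : Γ) (l : Λ) (x : M), γ • (l • x) = l • (γ • x))
    (X Y : Set M) (hXmeas : MeasurableSet X) (hYmeas : MeasurableSet Y)
    (hX : IsFundamentalDomain Γ X μ) (hY : IsFundamentalDomain Λ Y μ)
    (hXfin : μ X ≠ ⊤) :
    (∃ F : Set M, MeasurableSet F ∧
        IsFundamentalDomain Γ F μ ∧ IsFundamentalDomain Λ F μ) ↔
      (∀ A : Set M, MeasurableSet A →
        (∀ γ : Γ, μ (symmDiff (γ • A) A) = 0) →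
        (∀ l : Λ, μ (symmDiff (l • A) A) = 0) →
        μ (A ∩ X) = μ (A ∩ Y)) := by
  have : SMulCommClass Γ Λ M := ⟨hcomm⟩
  have : MeasurableConstSMul Γ M := ⟨hmeasΓ⟩
  have : MeasurableConstSMul Λ M := ⟨hmeasΛ⟩
  let _ := MulAction.prodOfSMulCommClass Γ Λ M
  have := measurableConstSMul_prod (M := M) (Γ := Γ) (Λ := Λ)
  have := smulInvariantMeasure_prod (Γ := Γ) (Λ := Λ) μ
  constructor
  · rintro ⟨F, -, hFΓ, hFΛ⟩ A - hAΓ hAΛ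
    calc μ (A ∩ X) = μ (A ∩ F) := hX.measure_inter_eq_of_ae_smul_eq hFΓ fun γ =>
          measure_symmDiff_eq_zero_iff.1 (hAΓ γ)
      _ = μ (A ∩ Y) := hFΛ.measure_inter_eq_of_ae_smul_eq hY fun l =>
          measure_symmDiff_eq_zero_iff.1 (hAΛ l)
  · intro h
    have hXY : ∀ I, MeasurableSet I → (∀ p : Γ × Λ, p • I = I) → μ (I ∩ X) = μ (I ∩ Y) :=
      fun I hI hinv => h I hI
        (fun γ => by rw [show γ • I = I by simpa [prod_smul_set] using hinv (γ, 1)]; simp)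
        (fun l => by rw [show l • I = I by simpa [prod_smul_set] using hinv (1, l)]; simp)
    obtain ⟨A, g, hA, hgA⟩ := exists_isAEPartition_smul_of_measure_inter_eq hXmeas hYmeas hXfin hXY
    refine ⟨⋃ n, (g n).1 • A n, .iUnion fun n => (hA.measurableSet n).const_smul _,
      hX.iUnion_smul_s4 hA _, ?_⟩
    convert hY.iUnion_smul_s4 hgA fun n => (g n).2⁻¹ using 3 with n
    rw [prod_smul_set, smul_comm (g n).1 (g n).2, inv_smul_smul]

/-- Two commuting measure-preserving actions with fundamental domains `X`, `Y` of finite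
positive measure have a common fundamental domain iff `μ (A ∩ X) = μ (A ∩ Y)` for every
measurable set `A` invariant under both actions. -/
theorem exists_common_fundamentalDomain_iff
    {M : Type*} [MeasurableSpace M]
    {Γ : Type*} [Group Γ] [Countable Γ] [MulAction Γ M]
    {Λ : Type*} [Group Λ] [Countable Λ] [MulAction Λ M]
    (hmeasΓ : ∀ γ : Γ, Measurable fun x : M => γ • x)
    (hmeasΛ : ∀ l : Λ, Measurable fun x : M => l • x)
    (μ : Measure M) [SigmaFinite μ]
    [SMulInvariantMeasure Γ M μ] [SMulInvariantMeasure Λ M μ]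
    (hcomm : ∀ (γ : Γ) (l : Λ) (x : M), γ • (l • x) = l • (γ • x))
    (X Y : Set M) (hXmeas : MeasurableSet X) (hYmeas : MeasurableSet Y)
    (hX : IsFundamentalDomain Γ X μ) (hY : IsFundamentalDomain Λ Y μ)
    (hX0 : 0 < μ X) (hXfin : μ X ≠ ⊤) (hY0 : 0 < μ Y) (hYfin : μ Y ≠ ⊤) :
    (∃ F : Set M, MeasurableSet F ∧
        IsFundamentalDomain Γ F μ ∧ IsFundamentalDomain Λ F μ) ↔
      (∀ A : Set M, MeasurableSet A →
        (∀ γ : Γ, μ (symmDiff (γ • A) A) = 0) →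
        (∀ l : Λ, μ (symmDiff (l • A) A) = 0) →
        μ (A ∩ X) = μ (A ∩ Y)) :=
  exists_common_fundamentalDomain_iff_general hmeasΓ hmeasΛ μ hcomm X Y hXmeas hYmeas hX hY hXfin
end

section
/- Let Γ and Λ be countable discrete groups with commuting measure-preserving actions on (M, B, m), with fundamental domains X for Γ and Y for Λ of finite positive measure. Suppose there exists a measurable function f ≥ 0 on M that tiles by both Γ and Λ, i.e., Σ_{γ∈Γ} f(γ·x) = 1 and Σ_{λ∈Λ} f(x·λ) = 1 for m-almost every x. Then Γ and Λ have a common fundamental domain. -/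
/-!
Inside one orbit of `Γ × Λ` the points are the edges of a bipartite graph whose vertices are the
`Γ`-orbits, represented by the points of `X`, and the `Λ`-orbits, represented by the points of `Y`;
a common fundamental domain is a perfect matching. Enumerate `Γ × Λ` as `(cₙ, dₙ)` and match
greedily: at step `n`, every unmatched `x ∈ X` such that `(cₙ, dₙ) • x` is an unmatched point of `Y`
is matched with it, and `F` collects the points `cₙ • x`, which lie in the `Γ`-orbit of `x` and in
the `Λ`-orbit of its partner. The tiling function gives `μ (W ∩ X) = ∫⁻ x in W, f = μ (W ∩ Y)` for
every jointly invariant `W`. Applied to the saturation of the unmatched points of `Y`, on which the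
greedy matching exhausts `X`, this shows, as `μ X < ∞`, that those points are null; symmetrically
for `X`.
-/

open MeasureTheory Set Pointwise ENNReal

section GreedyMatching

open Function

variable {G Ω : Type*} [Group G] [MulAction G Ω]

/-- The points of `X` and of `Y` that are still unmatched before step `n`; step `n` matches each
such `x` with `e n • x` whenever the latter is still unmatched. -/
def greedyRemaining (e : ℕ → G) (X Y : Set Ω) : ℕ → Set Ω × Set Ω
  | 0 => (X, Y)
  | n + 1 => ((greedyRemaining e X Y n).1 \ (e n)⁻¹ • (greedyRemaining e X Y n).2,
      (greedyRemaining e X Y n).2 \ e n • (greedyRemaining e X Y n).1)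

def greedyMatched (e : ℕ → G) (X Y : Set Ω) (n : ℕ) : Set Ω :=
  (greedyRemaining e X Y n).1 ∩ (e n)⁻¹ • (greedyRemaining e X Y n).2

variable (e : ℕ → G) (X Y : Set Ω)

theorem greedyRemaining_swap (n : ℕ) :
    greedyRemaining (fun n ↦ (e n)⁻¹) Y X n = (greedyRemaining e X Y n).swap := by
  induction n with
  | zero => rfl
  | succ n ih => simp only [greedyRemaining, ih, Prod.fst_swap, Prod.snd_swap, inv_inv,
      Prod.swap_prod_mk]

theorem smul_greedyMatched (n : ℕ) :
    e n • greedyMatched e X Y n = greedyMatched (fun n ↦ (e n)⁻¹) Y X n := by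
  rw [greedyMatched, greedyMatched, greedyRemaining_swap, smul_set_inter, smul_inv_smul,
    inv_inv, inter_comm]
  rfl

theorem greedyRemaining_fst_succ (n : ℕ) :
    (greedyRemaining e X Y (n + 1)).1 = (greedyRemaining e X Y n).1 \ greedyMatched e X Y n :=
  sdiff_self_inter.symm

theorem antitone_greedyRemaining_fst : Antitone fun n ↦ (greedyRemaining e X Y n).1 :=
  antitone_nat_of_succ_le fun _ ↦ sdiff_subset

theorem greedyMatched_subset (n : ℕ) : greedyMatched e X Y n ⊆ X :=
  inter_subset_left.trans (antitone_greedyRemaining_fst e X Y n.zero_le)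

theorem pairwise_disjoint_greedyMatched : Pairwise (Disjoint on (greedyMatched e X Y)) := by
  refine (pairwise_disjoint_on _).2 fun m n hmn ↦ ?_
  have : greedyMatched e X Y n ⊆ (greedyRemaining e X Y (m + 1)).1 :=
    inter_subset_left.trans (antitone_greedyRemaining_fst e X Y hmn)
  rw [greedyRemaining_fst_succ] at this
  exact (disjoint_sdiff_left.mono_left this).symm

theorem iInter_greedyRemaining_fst :
    ⋂ n, (greedyRemaining e X Y n).1 = X \ ⋃ n, greedyMatched e X Y n := by
  ext x
  simp only [mem_iInter, mem_sdiff, mem_iUnion, not_exists]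
  refine ⟨fun h ↦ ⟨h 0, fun n hn ↦ ?_⟩, fun ⟨hX, hA⟩ n ↦ ?_⟩
  · have := h (n + 1)
    rw [greedyRemaining_fst_succ] at this
    exact this.2 hn
  · induction n with
    | zero => exact hX
    | succ n ih => rw [greedyRemaining_fst_succ]; exact ⟨ih, hA n⟩

theorem smul_notMem_sdiff_iUnion_smul_greedyMatched {x : Ω}
    (hx : x ∈ X \ ⋃ n, greedyMatched e X Y n) (n : ℕ) :
    e n • x ∉ Y \ ⋃ m, e m • greedyMatched e X Y m := fun hy ↦ by
  rw [← iInter_greedyRemaining_fst] at hx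
  simp only [smul_greedyMatched, ← iInter_greedyRemaining_fst, greedyRemaining_swap,
    Prod.fst_swap] at hy
  have hn : x ∈ greedyMatched e X Y n :=
    ⟨mem_iInter.1 hx n, mem_inv_smul_set_iff.2 (mem_iInter.1 hy n)⟩
  exact (greedyRemaining_fst_succ e X Y n ▸ mem_iInter.1 hx (n + 1)).2 hn

variable [MeasurableSpace Ω] [MeasurableConstSMul G Ω]

theorem measurableSet_greedyRemaining (hX : MeasurableSet X) (hY : MeasurableSet Y) (n : ℕ) :
    MeasurableSet (greedyRemaining e X Y n).1 ∧ MeasurableSet (greedyRemaining e X Y n).2 := by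
  induction n with
  | zero => exact ⟨hX, hY⟩
  | succ n ih => exact ⟨ih.1.diff (ih.2.const_smul _), ih.2.diff (ih.1.const_smul _)⟩

theorem measurableSet_greedyMatched (hX : MeasurableSet X) (hY : MeasurableSet Y) (n : ℕ) :
    MeasurableSet (greedyMatched e X Y n) :=
  have h := measurableSet_greedyRemaining e X Y hX hY n
  h.1.inter (h.2.const_smul _)

variable {e X Y} [Countable G] {μ : Measure Ω} [SMulInvariantMeasure G Ω μ]

theorem measure_sdiff_iUnion_smul_greedyMatched (he : Surjective e) (hX : MeasurableSet X)
    (hY : MeasurableSet Y)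
    (hXY : ∀ W, MeasurableSet W → (∀ g : G, g • W = W) → μ (W ∩ X) = μ (W ∩ Y))
    (hfin : μ X ≠ ∞) : μ (Y \ ⋃ n, e n • greedyMatched e X Y n) = 0 := by
  set A := greedyMatched e X Y
  set B := fun n ↦ e n • A n
  have hB n : B n = greedyMatched (fun n ↦ (e n)⁻¹) Y X n := smul_greedyMatched e X Y n
  have hBm n : MeasurableSet (B n) := hB n ▸ measurableSet_greedyMatched _ Y X hY hX n
  set U := Y \ ⋃ n, B n
  have hUm : MeasurableSet U := hY.diff (.iUnion hBm)
  -- Every point of `W ∩ X` is matched, so `μ U + μ (W ∩ X) ≤ μ (W ∩ Y) = μ (W ∩ X)`.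
  set W := ⋃ g : G, g • U
  have hWm : MeasurableSet W := .iUnion fun g ↦ hUm.const_smul g
  have hWinv (g : G) : g • W = W := by
    simp only [W, smul_set_iUnion, smul_smul]
    exact (mul_left_surjective g).iUnion_comp (· • U)
  have hWX : W ∩ X ⊆ ⋃ n, A n ∩ W := by
    rintro x ⟨hxW, hxX⟩
    obtain ⟨g, hg⟩ := mem_iUnion.1 hxW
    obtain ⟨n, hn⟩ := he g⁻¹
    have hxA : x ∉ X \ ⋃ n, A n := fun hx ↦
      smul_notMem_sdiff_iUnion_smul_greedyMatched e X Y hx n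
        (hn ▸ mem_smul_set_iff_inv_smul_mem.1 hg)
    simpa [hxX, hxW] using hxA
  have hAB n : μ (A n ∩ W) = μ (B n ∩ W) := by
    rw [← measure_smul μ (e n) (A n ∩ W), smul_set_inter, hWinv]
  have hBdisj : Pairwise (Disjoint on fun n ↦ B n ∩ W) := fun m n hmn ↦ by
    simp only [onFun, hB]
    exact (pairwise_disjoint_greedyMatched _ Y X hmn).mono inter_subset_left inter_subset_left
  have hUB : Disjoint U (⋃ n, B n ∩ W) :=
    disjoint_sdiff_left.mono_right (iUnion_mono fun n ↦ inter_subset_left)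
  have hUBW : U ∪ ⋃ n, B n ∩ W ⊆ W ∩ Y := by
    refine union_subset (fun x hx ↦ ⟨mem_iUnion.2 ⟨1, by simpa using hx⟩, hx.1⟩)
      (iUnion_subset fun n ↦ ?_)
    exact inter_comm W Y ▸ inter_subset_inter_left W (hB n ▸ greedyMatched_subset _ Y X n)
  have hle : μ U + μ (W ∩ X) ≤ 0 + μ (W ∩ X) := calc
    μ U + μ (W ∩ X) ≤ μ U + ∑' n, μ (A n ∩ W) := by
      gcongr; exact (measure_mono hWX).trans (measure_iUnion_le _)
    _ = μ (U ∪ ⋃ n, B n ∩ W) := by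
      rw [measure_union hUB (.iUnion fun n ↦ (hBm n).inter hWm),
        measure_iUnion hBdisj fun n ↦ (hBm n).inter hWm]
      simp only [hAB]
    _ ≤ μ (W ∩ Y) := measure_mono hUBW
    _ = 0 + μ (W ∩ X) := by rw [hXY W hWm hWinv, zero_add]
  exact nonpos_iff_eq_zero.1 ((ENNReal.add_le_add_iff_right
    (ne_top_of_le_ne_top hfin (measure_mono inter_subset_right))).1 hle)

theorem measure_sdiff_iUnion_greedyMatched (he : Surjective e) (hX : MeasurableSet X)
    (hY : MeasurableSet Y)
    (hXY : ∀ W, MeasurableSet W → (∀ g : G, g • W = W) → μ (W ∩ X) = μ (W ∩ Y))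
    (hfin : μ X ≠ ∞) : μ (X \ ⋃ n, greedyMatched e X Y n) = 0 := by
  have hXY_univ := hXY univ .univ fun _ ↦ smul_set_univ
  rw [univ_inter, univ_inter] at hXY_univ
  simpa only [smul_greedyMatched (fun n ↦ (e n)⁻¹) Y X, inv_inv] using
    measure_sdiff_iUnion_smul_greedyMatched (e := fun n ↦ (e n)⁻¹) (inv_surjective.comp he) hY hX
      (fun W hW hWinv ↦ (hXY W hW hWinv).symm) (hXY_univ ▸ hfin)

end GreedyMatching

namespace MeasureTheory.IsFundamentalDomain

open Function

variable {G α : Type*} [Group G] [MulAction G α] [MeasurableSpace α] {μ : Measure α} {s : Set α}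

theorem of_ae_existsUnique (hs : NullMeasurableSet s μ) (h : ∀ᵐ x ∂μ, ∃! g : G, g • x ∈ s) :
    IsFundamentalDomain G s μ where
  nullMeasurableSet := hs
  ae_covers := h.mono fun _ hx ↦ hx.exists
  aedisjoint a b hab := by
    refine measure_mono_null (fun x ⟨hxa, hxb⟩ ↦ ?_) (ae_iff.1 h)
    exact fun hx ↦ hab <| inv_injective <|
      hx.unique (mem_smul_set_iff_inv_smul_mem.1 hxa) (mem_smul_set_iff_inv_smul_mem.1 hxb)

variable [Countable G]

theorem ae_existsUnique (h : IsFundamentalDomain G s μ) : ∀ᵐ x ∂μ, ∃! g : G, g • x ∈ s := by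
  have huniq : ∀ᵐ x ∂μ, ∀ g g' : G, g • x ∈ s → g' • x ∈ s → g = g' := by
    refine ae_all_iff.2 fun g ↦ ae_all_iff.2 fun g' ↦ ?_
    by_cases hgg : g = g'
    · exact .of_forall fun _ _ _ ↦ hgg
    refine measure_mono_null (fun x hx ↦ ?_) (h.aedisjoint (inv_injective.ne hgg))
    simp only [mem_compl_iff, mem_ofPred_eq, Classical.not_imp] at hx
    exact ⟨mem_inv_smul_set_iff.2 hx.1, mem_inv_smul_set_iff.2 hx.2.1⟩
  filter_upwards [h.ae_covers, huniq] with x ⟨g, hg⟩ hu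
  exact ⟨g, hg, fun g' hg' ↦ hu g' g hg' hg⟩

variable [MeasurableConstSMul G α] [SMulInvariantMeasure G α μ]

theorem iUnion_smul_of_pairwise_disjoint {ι : Type*} [Countable ι]
    (h : IsFundamentalDomain G s μ) {A : ι → Set α} (hAm : ∀ i, MeasurableSet (A i))
    (hAs : ∀ i, A i ⊆ s) (hA : Pairwise (Disjoint on A)) (hcover : μ (s \ ⋃ i, A i) = 0)
    (c : ι → G) :
    IsFundamentalDomain G (⋃ i, c i • A i) μ := by
  refine of_ae_existsUnique
    (MeasurableSet.iUnion fun i ↦ (hAm i).const_smul _).nullMeasurableSet ?_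
  have hcovered : ∀ᵐ x ∂μ, ∀ g : G, g • x ∉ s \ ⋃ i, A i :=
    ae_all_iff.2 fun g ↦ tendsto_smul_ae μ g (measure_eq_zero_iff_ae_notMem.1 hcover)
  filter_upwards [h.ae_existsUnique, hcovered] with x ⟨g, hg, hgu⟩ hx
  obtain ⟨i, hi⟩ : ∃ i, g • x ∈ A i := by simpa [hg] using hx g
  refine ⟨c i * g, mem_iUnion.2 ⟨i, by rw [mul_smul]; exact smul_mem_smul_set hi⟩,
    fun g' hg' ↦ ?_⟩
  obtain ⟨j, hj⟩ := mem_iUnion.1 hg'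
  rw [mem_smul_set_iff_inv_smul_mem, smul_smul] at hj
  have hg' : (c j)⁻¹ * g' = g := hgu _ (hAs j hj)
  obtain rfl : i = j := hA.eq (not_disjoint_iff.2 ⟨g • x, hi, hg' ▸ hj⟩)
  exact inv_mul_eq_iff_eq_mul.1 hg'

theorem setLIntegral_eq_measure_inter (h : IsFundamentalDomain G s μ) {f : α → ℝ≥0∞}
    (hf : AEMeasurable f μ) (htile : ∀ᵐ x ∂μ, ∑' g : G, f (g • x) = 1) {W : Set α}
    (hW : ∀ g : G, g • W = W) : ∫⁻ x in W, f x ∂μ = μ (W ∩ s) := by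
  have hfg (g : G) : AEMeasurable (fun x ↦ f (g⁻¹ • x)) (μ.restrict (W ∩ s)) :=
    (hf.comp_quasiMeasurePreserving (measurePreserving_smul g⁻¹ μ).quasiMeasurePreserving).restrict
  calc ∫⁻ x in W, f x ∂μ = ∑' g : G, ∫⁻ x in W ∩ s, f (g⁻¹ • x) ∂μ := by
        simp only [h.setLIntegral_eq_tsum' f W, hW]
    _ = ∫⁻ x in W ∩ s, ∑' g : G, f (g⁻¹ • x) ∂μ := (lintegral_tsum hfg).symm
    _ = ∫⁻ x in W ∩ s, 1 ∂μ := by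
        refine lintegral_congr_ae ((ae_restrict_of_ae htile).mono fun x hx ↦ ?_)
        rw [← hx]
        exact (Equiv.inv G).tsum_eq fun g ↦ f (g • x)
    _ = μ (W ∩ s) := setLIntegral_one _

end MeasureTheory.IsFundamentalDomain

theorem exists_common_isFundamentalDomain_of_measure_inter_eq {M Γ Λ : Type*}
    [MeasurableSpace M] [Group Γ] [Countable Γ] [MulAction Γ M] [Group Λ] [Countable Λ]
    [MulAction Λ M] [SMulCommClass Γ Λ M] [MeasurableConstSMul Γ M] [MeasurableConstSMul Λ M]
    {μ : Measure M} [SMulInvariantMeasure Γ M μ] [SMulInvariantMeasure Λ M μ] {X Y : Set M}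
    (hXm : MeasurableSet X) (hYm : MeasurableSet Y) (hX : IsFundamentalDomain Γ X μ)
    (hY : IsFundamentalDomain Λ Y μ) (hXfin : μ X ≠ ∞)
    (hXY : ∀ W, MeasurableSet W → (∀ γ : Γ, γ • W = W) → (∀ l : Λ, l • W = W) →
      μ (W ∩ X) = μ (W ∩ Y)) :
    ∃ F, MeasurableSet F ∧ IsFundamentalDomain Γ F μ ∧ IsFundamentalDomain Λ F μ := by
  let := MulAction.prodOfSMulCommClass Γ Λ M
  have hsmul (g : Γ × Λ) (S : Set M) : g • S = g.1 • g.2 • S :=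
    (image_image (g.1 • ·) (g.2 • ·) S).symm
  have : MeasurableConstSMul (Γ × Λ) M :=
    ⟨fun g ↦ (measurable_const_smul g.1).comp (measurable_const_smul g.2)⟩
  have : SMulInvariantMeasure (Γ × Λ) M μ := ⟨fun g s _ ↦ by
    change μ ((g.2 • ·) ⁻¹' ((g.1 • ·) ⁻¹' s)) = μ s
    rw [measure_preimage_smul, measure_preimage_smul]⟩
  obtain ⟨e, he⟩ := exists_surjective_nat (Γ × Λ)
  have hXY' (W : Set M) (hW : MeasurableSet W) (hWinv : ∀ g : Γ × Λ, g • W = W) :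
      μ (W ∩ X) = μ (W ∩ Y) :=
    hXY W hW (fun γ ↦ by simpa [hsmul] using hWinv (γ, 1))
      (fun l ↦ by simpa [hsmul] using hWinv (1, l))
  set A := greedyMatched e X Y
  have hAm n : MeasurableSet (A n) := measurableSet_greedyMatched e X Y hXm hYm n
  have hA : μ (X \ ⋃ n, A n) = 0 := measure_sdiff_iUnion_greedyMatched he hXm hYm hXY' hXfin
  have hB : μ (Y \ ⋃ n, e n • A n) = 0 :=
    measure_sdiff_iUnion_smul_greedyMatched he hXm hYm hXY' hXfin
  refine ⟨⋃ n, (e n).1 • A n, .iUnion fun n ↦ (hAm n).const_smul _,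
    hX.iUnion_smul_of_pairwise_disjoint hAm (greedyMatched_subset e X Y)
      (pairwise_disjoint_greedyMatched e X Y) hA _, ?_⟩
  have hF : ⋃ n, (e n).1 • A n = ⋃ n, (e n).2⁻¹ • e n • A n := iUnion_congr fun n ↦ by
    rw [hsmul, ← smul_comm, inv_smul_smul]
  rw [hF]
  refine hY.iUnion_smul_of_pairwise_disjoint (fun n ↦ (hAm n).const_smul _) ?_ ?_ hB _
  · exact fun n ↦ smul_greedyMatched e X Y n ▸ greedyMatched_subset _ Y X n
  · exact (funext (smul_greedyMatched e X Y) : (fun n ↦ e n • A n) = _) ▸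
      pairwise_disjoint_greedyMatched _ Y X

theorem exists_common_fundamentalDomain_of_tiling_function_general
    {M : Type*} [MeasurableSpace M]
    {Γ : Type*} [Group Γ] [Countable Γ] [MulAction Γ M]
    {Λ : Type*} [Group Λ] [Countable Λ] [MulAction Λ M]
    (hmeasΓ : ∀ γ : Γ, Measurable fun x : M => γ • x)
    (hmeasΛ : ∀ l : Λ, Measurable fun x : M => l • x)
    (μ : Measure M)
    [SMulInvariantMeasure Γ M μ] [SMulInvariantMeasure Λ M μ]
    (hcomm : ∀ (γ : Γ) (l : Λ) (x : M), γ • (l • x) = l • (γ • x))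
    (X Y : Set M) (hXmeas : MeasurableSet X) (hYmeas : MeasurableSet Y)
    (hX : IsFundamentalDomain Γ X μ) (hY : IsFundamentalDomain Λ Y μ)
    (hXfin : μ X ≠ ⊤)
    (f : M → ℝ≥0∞) (hf : Measurable f)
    (htileΓ : ∀ᵐ x ∂μ, (∑' γ : Γ, f (γ • x)) = 1)
    (htileΛ : ∀ᵐ x ∂μ, (∑' l : Λ, f (l • x)) = 1) :
    ∃ F : Set M, MeasurableSet F ∧
      IsFundamentalDomain Γ F μ ∧ IsFundamentalDomain Λ F μ := by
  have : MeasurableConstSMul Γ M := ⟨hmeasΓ⟩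
  have : MeasurableConstSMul Λ M := ⟨hmeasΛ⟩
  have : SMulCommClass Γ Λ M := ⟨hcomm⟩
  refine exists_common_isFundamentalDomain_of_measure_inter_eq hXmeas hYmeas hX hY hXfin
    fun W _ hWΓ hWΛ ↦ ?_
  rw [← hX.setLIntegral_eq_measure_inter hf.aemeasurable htileΓ hWΓ,
    hY.setLIntegral_eq_measure_inter hf.aemeasurable htileΛ hWΛ]

/-- If there is a nonnegative measurable function tiling by both commuting actions, then
the two groups have a common fundamental domain. -/
theorem exists_common_fundamentalDomain_of_tiling_function
    {M : Type*} [MeasurableSpace M]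
    {Γ : Type*} [Group Γ] [Countable Γ] [MulAction Γ M]
    {Λ : Type*} [Group Λ] [Countable Λ] [MulAction Λ M]
    (hmeasΓ : ∀ γ : Γ, Measurable fun x : M => γ • x)
    (hmeasΛ : ∀ l : Λ, Measurable fun x : M => l • x)
    (μ : Measure M) [SigmaFinite μ]
    [SMulInvariantMeasure Γ M μ] [SMulInvariantMeasure Λ M μ]
    (hcomm : ∀ (γ : Γ) (l : Λ) (x : M), γ • (l • x) = l • (γ • x))
    (X Y : Set M) (hXmeas : MeasurableSet X) (hYmeas : MeasurableSet Y)
    (hX : IsFundamentalDomain Γ X μ) (hY : IsFundamentalDomain Λ Y μ)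
    (hX0 : 0 < μ X) (hXfin : μ X ≠ ⊤) (hY0 : 0 < μ Y) (hYfin : μ Y ≠ ⊤)
    (f : M → ℝ≥0∞) (hf : Measurable f)
    (htileΓ : ∀ᵐ x ∂μ, (∑' γ : Γ, f (γ • x)) = 1)
    (htileΛ : ∀ᵐ x ∂μ, (∑' l : Λ, f (l • x)) = 1) :
    ∃ F : Set M, MeasurableSet F ∧
      IsFundamentalDomain Γ F μ ∧ IsFundamentalDomain Λ F μ :=
  exists_common_fundamentalDomain_of_tiling_function_general hmeasΓ hmeasΛ μ hcomm X Y hXmeas hYmeas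
    hX hY hXfin f hf htileΓ htileΛ
end

section
/- There exist two commuting measure-preserving actions of Z on M = R × {0,1} (with Lebesgue measure on each copy of R) admitting fundamental domains of equal measure but no common fundamental domain. Concretely: the left action n·(x,0) = (x+2n,0), n·(x,1) = (x+n,1) and the right action (x,0)·n = (x+n,0), (x,1)·n = (x+2n,1) have fundamental domains X = [0,2)×{0} ∪ [0,1)×{1} and Y = [0,1)×{0} ∪ [0,2)×{1} respectively, which have equal measure 3, yet the set A = R×{0} is invariant for both actions and m(A ∩ X) = 2 ≠ 1 = m(A ∩ Y), so no common fundamental domain exists. -/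
open MeasureTheory Set ENNReal

/-- The measure on `M = ℝ × Bool`: Lebesgue measure on each copy of `ℝ`. -/
noncomputable def exMeasure : Measure (ℝ × Bool) := (volume : Measure ℝ).prod Measure.count

/-- The left action: `n·(x,0) = (x+2n,0)`, `n·(x,1) = (x+n,1)` (false = 0, true = 1). -/
def actL (n : ℤ) (p : ℝ × Bool) : ℝ × Bool :=
  (p.1 + (if p.2 then (n : ℝ) else 2 * n), p.2)

/-- The right action: `(x,0)·n = (x+n,0)`, `(x,1)·n = (x+2n,1)`. -/
def actR (n : ℤ) (p : ℝ × Bool) : ℝ × Bool :=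
  (p.1 + (if p.2 then 2 * (n : ℝ) else n), p.2)

/-- `S` is a fundamental domain for the action `a` of `ℤ` on `ℝ × Bool`. -/
def IsFD (a : ℤ → ℝ × Bool → ℝ × Bool) (S : Set (ℝ × Bool)) : Prop :=
  MeasurableSet S ∧ exMeasure ((⋃ n : ℤ, a n '' S)ᶜ) = 0 ∧
    Pairwise fun n n' : ℤ => exMeasure ((a n '' S) ∩ (a n' '' S)) = 0

/-! Both actions translate each copy of `ℝ` by a fixed step, so `[0, step)` on each copy is a
fundamental domain, and every fundamental domain of such an action is one in Mathlib's sense.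
A measurable invariant set meets any two fundamental domains of the same action in equal
measure (`IsAddFundamentalDomain.measure_set_eq`), so a common fundamental domain `F` would give
`2 = m(A ∩ X) = m(A ∩ F) = m(A ∩ Y) = 1` for the jointly invariant set `A = ℝ × {0}`. -/

def shiftAct (c : Bool → ℝ) (n : ℤ) (p : ℝ × Bool) : ℝ × Bool :=
  (p.1 + n * c p.2, p.2)

lemma actL_eq_shiftAct : actL = shiftAct fun b => if b then 1 else 2 := by
  funext n ⟨x, b⟩
  cases b <;> simp [actL, shiftAct, mul_comm]

lemma actR_eq_shiftAct : actR = shiftAct fun b => if b then 2 else 1 := by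
  funext n ⟨x, b⟩
  cases b <;> simp [actR, shiftAct, mul_comm]

abbrev shiftAction (c : Bool → ℝ) : AddAction ℤ (ℝ × Bool) where
  vadd := shiftAct c
  zero_vadd p := show shiftAct c 0 p = p by simp [shiftAct]
  add_vadd m n p := show shiftAct c (m + n) p = shiftAct c m (shiftAct c n p) by
    simp only [shiftAct]; push_cast; ring_nf

lemma measurable_shiftAct (c : Bool → ℝ) (n : ℤ) : Measurable (shiftAct c n) := by
  unfold shiftAct
  fun_prop

lemma exMeasure_apply {E : Set (ℝ × Bool)} (hE : MeasurableSet E) :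
    exMeasure E = volume ((·, false) ⁻¹' E) + volume ((·, true) ⁻¹' E) := by
  rw [exMeasure, Measure.prod_apply_symm hE, lintegral_count, tsum_bool]

lemma measurePreserving_shiftAct (c : Bool → ℝ) (n : ℤ) :
    MeasurePreserving (shiftAct c n) exMeasure exMeasure := by
  refine ⟨measurable_shiftAct c n, Measure.ext fun E hE => ?_⟩
  rw [Measure.map_apply (measurable_shiftAct c n) hE,
    exMeasure_apply (hE.preimage (measurable_shiftAct c n)), exMeasure_apply hE]
  exact congr_arg₂ (· + ·)
    (measure_preimage_add_right volume (n * c false) ((·, false) ⁻¹' E))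
    (measure_preimage_add_right volume (n * c true) ((·, true) ⁻¹' E))

section AddAction

variable [AddAction ℤ (ℝ × Bool)] {S T A : Set (ℝ × Bool)}

lemma IsFD.of_existsUnique (hS : MeasurableSet S) (h : ∀ p, ∃! n : ℤ, n +ᵥ p ∈ S) :
    IsFD (· +ᵥ ·) S := by
  refine ⟨hS, ?_, fun n n' hne =>
    show exMeasure ((n +ᵥ ·) '' S ∩ (n' +ᵥ ·) '' S) = 0 from ?_⟩
  · suffices (⋃ n : ℤ, (n +ᵥ ·) '' S) = univ by rw [this, compl_univ, measure_empty]
    refine eq_univ_of_forall fun p => mem_iUnion.2 ?_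
    obtain ⟨n, hn, -⟩ := h p
    exact ⟨-n, n +ᵥ p, hn, neg_vadd_vadd n p⟩
  · suffices (n +ᵥ ·) '' S ∩ (n' +ᵥ ·) '' S = ∅ by rw [this, measure_empty]
    refine eq_empty_of_forall_notMem ?_
    rintro _ ⟨⟨s, hs, rfl⟩, s', hs', hss'⟩
    have : -n' = -n := (h (n +ᵥ s)).unique (by simpa [← hss'] using hs') (by simpa using hs)
    exact hne (neg_injective this.symm)

lemma IsFD.isAddFundamentalDomain (h : IsFD (· +ᵥ ·) S) :
    IsAddFundamentalDomain ℤ S exMeasure where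
  nullMeasurableSet := h.1.nullMeasurableSet
  ae_covers := by
    refine ae_iff.2 (measure_mono_null (fun p hp => ?_) h.2.1)
    simp only [mem_compl_iff, mem_iUnion, not_exists]
    rintro n ⟨s, hs, rfl⟩
    exact hp ⟨-n, by rwa [neg_vadd_vadd]⟩
  aedisjoint := h.2.2

lemma IsFD.measure_inter_eq [MeasurableConstVAdd ℤ (ℝ × Bool)]
    [VAddInvariantMeasure ℤ (ℝ × Bool) exMeasure]
    (hS : IsFD (· +ᵥ ·) S) (hT : IsFD (· +ᵥ ·) T)
    (hA : MeasurableSet A) (hAinv : ∀ n : ℤ, (n +ᵥ ·) '' A = A) :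
    exMeasure (A ∩ S) = exMeasure (A ∩ T) :=
  hS.isAddFundamentalDomain.measure_set_eq hT.isAddFundamentalDomain hA fun n => by
    rw [preimage_vadd, ← image_vadd, hAinv]

end AddAction

lemma isFD_shiftAct {c : Bool → ℝ} (hc : ∀ b, 0 < c b) :
    IsFD (shiftAct c) (Ico 0 (c false) ×ˢ {false} ∪ Ico 0 (c true) ×ˢ {true}) := by
  let := shiftAction c
  refine IsFD.of_existsUnique (by measurability) fun ⟨x, b⟩ => ?_
  have hmem : ∀ n : ℤ,
      n +ᵥ (x, b) ∈ Ico 0 (c false) ×ˢ {false} ∪ Ico 0 (c true) ×ˢ {true} ↔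
        x + n • c b ∈ Ico 0 (0 + c b) := by
    intro n
    change shiftAct c n (x, b) ∈ _ ↔ _
    cases b <;> simp [shiftAct, zsmul_eq_mul]
  simpa only [hmem] using existsUnique_add_zsmul_mem_Ico (hc b) x 0

lemma IsFD.shiftAct_measure_inter_eq {c : Bool → ℝ} {S T A : Set (ℝ × Bool)}
    (hS : IsFD (shiftAct c) S) (hT : IsFD (shiftAct c) T) (hA : MeasurableSet A)
    (hAinv : ∀ n, shiftAct c n '' A = A) :
    exMeasure (A ∩ S) = exMeasure (A ∩ T) :=
  letI := shiftAction c
  haveI : MeasurableConstVAdd ℤ (ℝ × Bool) := ⟨measurable_shiftAct c⟩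
  haveI : VAddInvariantMeasure ℤ (ℝ × Bool) exMeasure :=
    ⟨fun n _ hE => (measurePreserving_shiftAct c n).measure_preimage hE.nullMeasurableSet⟩
  IsFD.measure_inter_eq hS hT hA hAinv

lemma shiftAct_image_univ_prod_singleton (c : Bool → ℝ) (n : ℤ) (b : Bool) :
    shiftAct c n '' (univ ×ˢ {b}) = univ ×ˢ {b} := by
  refine Subset.antisymm ?_ fun ⟨x, b'⟩ hb => ⟨(x - n * c b', b'), hb, by simp [shiftAct]⟩
  rintro _ ⟨p, hp, rfl⟩
  exact hp

lemma shiftAct_comm (c d : Bool → ℝ) (n m : ℤ) (p : ℝ × Bool) :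
    shiftAct c n (shiftAct d m p) = shiftAct d m (shiftAct c n p) := by
  simp only [shiftAct, add_right_comm]

lemma exMeasure_prod_false_union_prod_true {I J : Set ℝ} (hI : MeasurableSet I)
    (hJ : MeasurableSet J) :
    exMeasure (I ×ˢ {false} ∪ J ×ˢ {true}) = volume I + volume J := by
  rw [exMeasure_apply (by measurability)]
  congr 2 <;> ext <;> simp

lemma exMeasure_univ_prod_false_inter {E : Set (ℝ × Bool)} (hE : MeasurableSet E) :
    exMeasure (univ ×ˢ {false} ∩ E) = volume ((·, false) ⁻¹' E) := by
  rw [exMeasure_apply (by measurability)]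
  simp

/-- Two commuting measure-preserving actions of `ℤ` on `ℝ × Bool` with fundamental domains
of equal measure, but no common fundamental domain: the invariant set `A = ℝ × {0}` meets
them in different measures. -/
theorem no_common_fundamentalDomain_example :
    (∀ n m : ℤ, ∀ p : ℝ × Bool, actL n (actR m p) = actR m (actL n p)) ∧
    (∀ n : ℤ, MeasurePreserving (actL n) exMeasure exMeasure) ∧
    (∀ n : ℤ, MeasurePreserving (actR n) exMeasure exMeasure) ∧
    IsFD actL (Ico (0:ℝ) 2 ×ˢ {false} ∪ Ico (0:ℝ) 1 ×ˢ {true}) ∧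
    IsFD actR (Ico (0:ℝ) 1 ×ˢ {false} ∪ Ico (0:ℝ) 2 ×ˢ {true}) ∧
    exMeasure (Ico (0:ℝ) 2 ×ˢ {false} ∪ Ico (0:ℝ) 1 ×ˢ {true}) =
      exMeasure (Ico (0:ℝ) 1 ×ˢ {false} ∪ Ico (0:ℝ) 2 ×ˢ {true}) ∧
    (∀ n : ℤ, actL n '' ((univ : Set ℝ) ×ˢ {false}) = (univ : Set ℝ) ×ˢ {false}) ∧
    (∀ n : ℤ, actR n '' ((univ : Set ℝ) ×ˢ {false}) = (univ : Set ℝ) ×ˢ {false}) ∧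
    exMeasure (((univ : Set ℝ) ×ˢ {false}) ∩
        (Ico (0:ℝ) 2 ×ˢ {false} ∪ Ico (0:ℝ) 1 ×ˢ {true})) = 2 ∧
    exMeasure (((univ : Set ℝ) ×ˢ {false}) ∩
        (Ico (0:ℝ) 1 ×ˢ {false} ∪ Ico (0:ℝ) 2 ×ˢ {true})) = 1 ∧
    ¬ ∃ F : Set (ℝ × Bool), IsFD actL F ∧ IsFD actR F := by
  have hX : IsFD actL (Ico (0:ℝ) 2 ×ˢ {false} ∪ Ico (0:ℝ) 1 ×ˢ {true}) :=
    actL_eq_shiftAct ▸ isFD_shiftAct fun b => by cases b <;> norm_num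
  have hY : IsFD actR (Ico (0:ℝ) 1 ×ˢ {false} ∪ Ico (0:ℝ) 2 ×ˢ {true}) :=
    actR_eq_shiftAct ▸ isFD_shiftAct fun b => by cases b <;> norm_num
  have hAX : exMeasure (((univ : Set ℝ) ×ˢ {false}) ∩
      (Ico (0:ℝ) 2 ×ˢ {false} ∪ Ico (0:ℝ) 1 ×ˢ {true})) = 2 := by
    simp [exMeasure_univ_prod_false_inter hX.1]
  have hAY : exMeasure (((univ : Set ℝ) ×ˢ {false}) ∩
      (Ico (0:ℝ) 1 ×ˢ {false} ∪ Ico (0:ℝ) 2 ×ˢ {true})) = 1 := by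
    simp [exMeasure_univ_prod_false_inter hY.1]
  have hA : MeasurableSet ((univ : Set ℝ) ×ˢ {false}) := by measurability
  refine ⟨fun n m p => ?_, fun n => ?_, fun n => ?_, hX, hY, ?_, fun n => ?_, fun n => ?_,
    hAX, hAY, ?_⟩
  · rw [actL_eq_shiftAct, actR_eq_shiftAct, shiftAct_comm]
  · exact actL_eq_shiftAct ▸ measurePreserving_shiftAct _ n
  · exact actR_eq_shiftAct ▸ measurePreserving_shiftAct _ n
  · simp only [exMeasure_prod_false_union_prod_true measurableSet_Ico measurableSet_Ico, add_comm]
  · exact actL_eq_shiftAct ▸ shiftAct_image_univ_prod_singleton _ n false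
  · exact actR_eq_shiftAct ▸ shiftAct_image_univ_prod_singleton _ n false
  · rintro ⟨F, hFL, hFR⟩
    rw [actL_eq_shiftAct] at hX hFL
    rw [actR_eq_shiftAct] at hY hFR
    have h :=
      (hX.shiftAct_measure_inter_eq hFL hA (shiftAct_image_univ_prod_singleton _ · false)).trans
      (hFR.shiftAct_measure_inter_eq hY hA (shiftAct_image_univ_prod_singleton _ · false))
    rw [hAX, hAY] at h
    norm_num at h
end

section
/- In the setting of two commuting measure-preserving actions of countable groups Γ, Λ on (M, B, m) with finite-positive-measure fundamental domains X, Y satisfying m(X) = (k+ε)·m(Y) for an integer k ≥ 1 and 0 ≤ ε < 1: if there exists a sequence of measurable sets (A_n) of positive finite measure with asymptotically zero (Γ,X)-boundary and asymptotically zero (Λ,Y)-boundary, then m(A ∩ X) = (k+ε)·m(A ∩ Y) for every measurable set A invariant under both actions. -/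
/-!
Cut a set `A` along the translates `γ • X` of the fundamental domain. Because `B` is invariant,
every translate lying inside `A` up to a null set contains exactly the proportion
`μ (B ∩ X) / μ X` of `B`, and each boundary translate changes the count by at most `μ X`.
So `μ (B ∩ A n) / μ (A n)` tends to `μ (B ∩ X) / μ X` when the `(Γ, X)`-boundary is
asymptotically zero, and likewise to `μ (B ∩ Y) / μ Y`; equating the two limits and using
`μ X = (k + ε) μ Y` gives the claim.
-/

open MeasureTheory Set Pointwise ENNReal Filter

/-- The number of translates `γ • X` meeting both `A` and its complement in nonzero measure. -/
noncomputable def boundaryCount {M : Type*} [MeasurableSpace M] (Γ : Type*) [Group Γ]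
    [MulAction Γ M] (μ : Measure M) (X A : Set M) : ℕ∞ :=
  {γ : Γ | μ ((γ • X) ∩ A) ≠ 0 ∧ μ ((γ • X) ∩ Aᶜ) ≠ 0}.encard

open Topology

section

variable {M G : Type*} [MeasurableSpace M] [Group G] [MulAction G M] {μ : Measure M}
  {X A B : Set M}

def boundaryIndices (G : Type*) [Group G] [MulAction G M] (μ : Measure M) (X A : Set M) :
    Set G :=
  {γ : G | μ ((γ • X) ∩ A) ≠ 0 ∧ μ ((γ • X) ∩ Aᶜ) ≠ 0}

theorem measure_inter_inter_eq_of_measure_inter_compl_eq_zero (S : Set M) {T : Set M}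
    (hT : μ (T ∩ Aᶜ) = 0) : μ (S ∩ A ∩ T) = μ (S ∩ T) := by
  rw [inter_right_comm]
  refine measure_inter_conull' (measure_mono_null ?_ hT)
  exact fun x hx => ⟨hx.1.2, hx.2⟩

variable [SMulInvariantMeasure G M μ]

theorem measure_inter_smul_eq_of_ae_invariant (hB : ∀ g : G, g • B =ᵐ[μ] B) (g : G) :
    μ (B ∩ g • X) = μ (B ∩ X) :=
  calc μ (B ∩ g • X) = μ (g⁻¹ • (B ∩ g • X)) := (measure_smul μ g⁻¹ _).symm
    _ = μ (g⁻¹ • B ∩ X) := by rw [smul_set_inter, inv_smul_smul]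
    _ = μ (B ∩ X) := measure_congr (ae_eq_set_inter (hB g⁻¹) (ae_eq_refl X))

theorem measure_inter_inter_smul_le_and_le (hB : ∀ g : G, g • B =ᵐ[μ] B)
    (hX0 : μ X ≠ 0) (hXtop : μ X ≠ ⊤) (g : G) :
    μ (B ∩ A ∩ g • X) ≤
        μ (B ∩ X) / μ X * μ (A ∩ g • X) +
          (boundaryIndices G μ X A).indicator (fun _ => μ X) g ∧
      μ (B ∩ X) / μ X * μ (A ∩ g • X) ≤
        μ (B ∩ A ∩ g • X) + (boundaryIndices G μ X A).indicator (fun _ => μ X) g := by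
  by_cases hin : μ (g • X ∩ A) = 0
  · have hA : μ (A ∩ g • X) = 0 := by rwa [inter_comm]
    have hBA : μ (B ∩ A ∩ g • X) = 0 :=
      measure_mono_null (inter_subset_inter_left _ inter_subset_right) hA
    simp [hA, hBA]
  by_cases hout : μ (g • X ∩ Aᶜ) = 0
  · have hA : μ (A ∩ g • X) = μ X := by
      simpa using measure_inter_inter_eq_of_measure_inter_compl_eq_zero univ hout
    have hBA : μ (B ∩ A ∩ g • X) = μ (B ∩ X) := by
      rw [measure_inter_inter_eq_of_measure_inter_compl_eq_zero B hout,
        measure_inter_smul_eq_of_ae_invariant hB]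
    rw [hA, hBA, ENNReal.div_mul_cancel hX0 hXtop]
    exact ⟨le_self_add, le_self_add⟩
  · rw [indicator_of_mem (show g ∈ boundaryIndices G μ X A from ⟨hin, hout⟩)]
    have hratio : μ (B ∩ X) / μ X ≤ 1 :=
      ENNReal.div_le_of_le_mul (by simpa using measure_mono inter_subset_right)
    constructor
    · calc μ (B ∩ A ∩ g • X) ≤ μ (g • X) := measure_mono inter_subset_right
        _ = μ X := measure_smul μ g X
        _ ≤ _ := le_add_self
    · calc μ (B ∩ X) / μ X * μ (A ∩ g • X) ≤ 1 * μ (g • X) :=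
            mul_le_mul' hratio (measure_mono inter_subset_right)
        _ = μ X := by rw [one_mul, measure_smul]
        _ ≤ _ := le_add_self

theorem MeasureTheory.IsFundamentalDomain.measure_inter_le_and_le
    [Countable G] [MeasurableConstSMul G M]
    (hX : IsFundamentalDomain G X μ) (hB : ∀ g : G, g • B =ᵐ[μ] B)
    (hX0 : μ X ≠ 0) (hXtop : μ X ≠ ⊤) (A : Set M) :
    μ (B ∩ A) ≤ μ (B ∩ X) / μ X * μ A + boundaryCount G μ X A * μ X ∧
      μ (B ∩ X) / μ X * μ A ≤ μ (B ∩ A) + boundaryCount G μ X A * μ X := by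
  have hcount : ∑' g : G, (boundaryIndices G μ X A).indicator (fun _ => μ X) g =
      boundaryCount G μ X A * μ X := by
    rw [← tsum_subtype, ENNReal.tsum_set_const]
    rfl
  rw [hX.measure_eq_tsum' A, hX.measure_eq_tsum' (B ∩ A), ← ENNReal.tsum_mul_left, ← hcount,
    ← ENNReal.tsum_add, ← ENNReal.tsum_add]
  exact ⟨ENNReal.tsum_le_tsum fun g => (measure_inter_inter_smul_le_and_le hB hX0 hXtop g).1,
    ENNReal.tsum_le_tsum fun g => (measure_inter_inter_smul_le_and_le hB hX0 hXtop g).2⟩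

theorem MeasureTheory.IsFundamentalDomain.tendsto_measure_inter_div
    [Countable G] [MeasurableConstSMul G M]
    (hX : IsFundamentalDomain G X μ) (hB : ∀ g : G, g • B =ᵐ[μ] B)
    (hX0 : μ X ≠ 0) (hXtop : μ X ≠ ⊤) {A : ℕ → Set M}
    (hA0 : ∀ n, μ (A n) ≠ 0) (hAtop : ∀ n, μ (A n) ≠ ⊤)
    (hbd : limsup (fun n => (boundaryCount G μ X (A n) : ℝ≥0∞) / μ (A n)) atTop = 0) :
    Tendsto (fun n => μ (B ∩ A n) / μ (A n)) atTop (𝓝 (μ (B ∩ X) / μ X)) := by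
  set r := μ (B ∩ X) / μ X
  set e : ℕ → ℝ≥0∞ := fun n => (boundaryCount G μ X (A n) : ℝ≥0∞) / μ (A n) * μ X
  have he : Tendsto e atTop (𝓝 0) := by
    have h := tendsto_of_le_liminf_of_limsup_le zero_le hbd.le
    simpa using ENNReal.Tendsto.mul_const h (Or.inr hXtop)
  have hupper : ∀ n, μ (B ∩ A n) / μ (A n) ≤ r + e n := fun n =>
    calc μ (B ∩ A n) / μ (A n)
        ≤ (r * μ (A n) + boundaryCount G μ X (A n) * μ X) / μ (A n) :=
          ENNReal.div_le_div_right (hX.measure_inter_le_and_le hB hX0 hXtop (A n)).1 _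
      _ = r + e n := by
          rw [ENNReal.add_div, ENNReal.mul_div_cancel_right (hA0 n) (hAtop n),
            ENNReal.mul_div_right_comm]
  have hlower : ∀ n, r - e n ≤ μ (B ∩ A n) / μ (A n) := fun n => tsub_le_iff_right.mpr <|
    calc r = r * μ (A n) / μ (A n) := (ENNReal.mul_div_cancel_right (hA0 n) (hAtop n)).symm
      _ ≤ (μ (B ∩ A n) + boundaryCount G μ X (A n) * μ X) / μ (A n) :=
          ENNReal.div_le_div_right (hX.measure_inter_le_and_le hB hX0 hXtop (A n)).2 _
      _ = μ (B ∩ A n) / μ (A n) + e n := by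
          rw [ENNReal.add_div, ENNReal.mul_div_right_comm]
  refine tendsto_of_tendsto_of_tendsto_of_le_of_le ?_ ?_ hlower hupper
  · simpa using ENNReal.Tendsto.sub tendsto_const_nhds he (Or.inr zero_ne_top)
  · simpa using tendsto_const_nhds.add he

end

theorem measure_inter_eq_of_asymptotically_zero_boundary_general
    {M : Type*} [MeasurableSpace M]
    {Γ : Type*} [Group Γ] [Countable Γ] [MulAction Γ M]
    {Λ : Type*} [Group Λ] [Countable Λ] [MulAction Λ M]
    (hmeasΓ : ∀ γ : Γ, Measurable fun x : M => γ • x)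
    (hmeasΛ : ∀ l : Λ, Measurable fun x : M => l • x)
    (μ : Measure M)
    [SMulInvariantMeasure Γ M μ] [SMulInvariantMeasure Λ M μ]
    (X Y : Set M)
    (hX : IsFundamentalDomain Γ X μ) (hY : IsFundamentalDomain Λ Y μ)
    (hX0 : 0 < μ X) (hXfin : μ X ≠ ⊤) (hY0 : 0 < μ Y) (hYfin : μ Y ≠ ⊤)
    (k : ℕ) (ε : ℝ)
    (hcov : μ X = ((k : ℝ≥0∞) + ENNReal.ofReal ε) * μ Y)
    (A : ℕ → Set M)
    (hA0 : ∀ n, 0 < μ (A n)) (hAfin : ∀ n, μ (A n) ≠ ⊤)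
    (hbdΓ : limsup (fun n => (boundaryCount Γ μ X (A n) : ℝ≥0∞) / μ (A n)) atTop = 0)
    (hbdΛ : limsup (fun n => (boundaryCount Λ μ Y (A n) : ℝ≥0∞) / μ (A n)) atTop = 0) :
    ∀ B : Set M, MeasurableSet B →
      (∀ γ : Γ, μ (symmDiff (γ • B) B) = 0) →
      (∀ l : Λ, μ (symmDiff (l • B) B) = 0) →
      μ (B ∩ X) = ((k : ℝ≥0∞) + ENNReal.ofReal ε) * μ (B ∩ Y) := by
  intro B _ hBΓ hBΛ
  have : MeasurableConstSMul Γ M := ⟨hmeasΓ⟩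
  have : MeasurableConstSMul Λ M := ⟨hmeasΛ⟩
  have hA0' : ∀ n, μ (A n) ≠ 0 := fun n => (hA0 n).ne'
  have hratio : μ (B ∩ X) / μ X = μ (B ∩ Y) / μ Y :=
    tendsto_nhds_unique
      (hX.tendsto_measure_inter_div (fun γ => measure_symmDiff_eq_zero_iff.mp (hBΓ γ))
        hX0.ne' hXfin hA0' hAfin hbdΓ)
      (hY.tendsto_measure_inter_div (fun l => measure_symmDiff_eq_zero_iff.mp (hBΛ l))
        hY0.ne' hYfin hA0' hAfin hbdΛ)
  calc μ (B ∩ X) = μ (B ∩ X) / μ X * μ X := (ENNReal.div_mul_cancel hX0.ne' hXfin).symm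
    _ = μ (B ∩ Y) / μ Y * μ Y * ((k : ℝ≥0∞) + ENNReal.ofReal ε) := by
        rw [hratio, hcov, mul_comm _ (μ Y), mul_assoc]
    _ = ((k : ℝ≥0∞) + ENNReal.ofReal ε) * μ (B ∩ Y) := by
        rw [ENNReal.div_mul_cancel hY0.ne' hYfin, mul_comm]

/-- If `μ X = (k+ε)·μ Y` and there is a sequence of sets with asymptotically zero
`(Γ,X)`- and `(Λ,Y)`-boundary, then `μ (A ∩ X) = (k+ε)·μ (A ∩ Y)` for every jointly
invariant set `A`. -/
theorem measure_inter_eq_of_asymptotically_zero_boundary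
    {M : Type*} [MeasurableSpace M]
    {Γ : Type*} [Group Γ] [Countable Γ] [MulAction Γ M]
    {Λ : Type*} [Group Λ] [Countable Λ] [MulAction Λ M]
    (hmeasΓ : ∀ γ : Γ, Measurable fun x : M => γ • x)
    (hmeasΛ : ∀ l : Λ, Measurable fun x : M => l • x)
    (μ : Measure M) [SigmaFinite μ]
    [SMulInvariantMeasure Γ M μ] [SMulInvariantMeasure Λ M μ]
    (hcomm : ∀ (γ : Γ) (l : Λ) (x : M), γ • (l • x) = l • (γ • x))
    (X Y : Set M) (hXmeas : MeasurableSet X) (hYmeas : MeasurableSet Y)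
    (hX : IsFundamentalDomain Γ X μ) (hY : IsFundamentalDomain Λ Y μ)
    (hX0 : 0 < μ X) (hXfin : μ X ≠ ⊤) (hY0 : 0 < μ Y) (hYfin : μ Y ≠ ⊤)
    (k : ℕ) (hk : 1 ≤ k) (ε : ℝ) (hε0 : 0 ≤ ε) (hε1 : ε < 1)
    (hcov : μ X = ((k : ℝ≥0∞) + ENNReal.ofReal ε) * μ Y)
    (A : ℕ → Set M) (hAmeas : ∀ n, MeasurableSet (A n))
    (hA0 : ∀ n, 0 < μ (A n)) (hAfin : ∀ n, μ (A n) ≠ ⊤)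
    (hbdΓ : limsup (fun n => (boundaryCount Γ μ X (A n) : ℝ≥0∞) / μ (A n)) atTop = 0)
    (hbdΛ : limsup (fun n => (boundaryCount Λ μ Y (A n) : ℝ≥0∞) / μ (A n)) atTop = 0) :
    ∀ B : Set M, MeasurableSet B →
      (∀ γ : Γ, μ (symmDiff (γ • B) B) = 0) →
      (∀ l : Λ, μ (symmDiff (l • B) B) = 0) →
      μ (B ∩ X) = ((k : ℝ≥0∞) + ENNReal.ofReal ε) * μ (B ∩ Y) :=
  measure_inter_eq_of_asymptotically_zero_boundary_general hmeasΓ hmeasΛ μ X Y hX hY hX0 hXfin hY0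
    hYfin k ε hcov A hA0 hAfin hbdΓ hbdΛ
end

section
/- Let Γ act measure-preservingly on (M, B, m) with fundamental domain X of finite positive measure, and let (A_n) be a sequence of measurable sets of finite positive measure with asymptotically zero (Γ,X)-boundary. Then for every bounded nonnegative measurable Γ-invariant function f on M, (1/m(X)) ∫_X f dm = liminf_{n→∞} (1/m(A_n)) ∫_{A_n} f dm. -/
open MeasureTheory Set Pointwise ENNReal Filter Topology

namespace ENNReal

theorem inv_mul_le_add_div {a b e m : ℝ≥0∞} (hm0 : m ≠ 0) (hm : m ≠ ∞)
    (h : b ≤ a * m + e) : m⁻¹ * b ≤ a + e / m :=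
  calc m⁻¹ * b ≤ m⁻¹ * (a * m + e) := by gcongr
    _ = a + e / m := by
      rw [mul_add, mul_left_comm, ENNReal.inv_mul_cancel hm0 hm, mul_one, ENNReal.div_eq_inv_mul]

theorem le_inv_mul_add_div {a b e m : ℝ≥0∞} (hm0 : m ≠ 0) (hm : m ≠ ∞)
    (h : a * m ≤ b + e) : a ≤ m⁻¹ * b + e / m :=
  calc a = m⁻¹ * (a * m) := by rw [mul_left_comm, ENNReal.inv_mul_cancel hm0 hm, mul_one]
    _ ≤ m⁻¹ * (b + e) := by gcongr
    _ = m⁻¹ * b + e / m := by rw [mul_add, ENNReal.div_eq_inv_mul]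

theorem tendsto_of_le_add_of_le_add {α : Type*} {l : Filter α} {u ε : α → ℝ≥0∞} {a : ℝ≥0∞}
    (ha : a ≠ ∞) (hε : Tendsto ε l (𝓝 0)) (hle : ∀ x, u x ≤ a + ε x)
    (hge : ∀ x, a ≤ u x + ε x) : Tendsto u l (𝓝 a) := by
  refine (ENNReal.tendsto_nhds ha).2 fun δ hδ => ?_
  filter_upwards [hε (Iic_mem_nhds hδ)] with x (hx : ε x ≤ δ)
  exact ⟨tsub_le_iff_right.2 ((hge x).trans (by gcongr)), (hle x).trans (by gcongr)⟩

end ENNReal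

section Straddles

variable {M : Type*} [MeasurableSpace M] {μ : Measure M} {f : M → ℝ≥0∞} {A T : Set M}
  {κ C e : ℝ≥0∞}

def Straddles (μ : Measure M) (T A : Set M) : Prop :=
  μ (T ∩ A) ≠ 0 ∧ μ (T ∩ Aᶜ) ≠ 0

theorem boundaryCount_eq_encard_straddles (Γ : Type*) [Group Γ] [MulAction Γ M]
    (μ : Measure M) (X A : Set M) :
    boundaryCount Γ μ X A = {γ : Γ | Straddles μ (γ • X) A}.encard :=
  rfl

theorem inter_ae_eq_or_measure_inter_eq_zero (h : ¬Straddles μ T A) :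
    (A ∩ T : Set M) =ᵐ[μ] T ∨ μ (A ∩ T) = 0 := by
  rw [Straddles, not_and_or, not_not, not_not] at h
  rcases h with h | h
  · exact Or.inr (by rwa [inter_comm])
  · refine Or.inl (ae_eq_set.2 ⟨by rw [sdiff_eq_empty.2 inter_subset_right, measure_empty], ?_⟩)
    rwa [inter_comm, sdiff_self_inter, sdiff_eq]

theorem setLIntegral_inter_le_add (hfC : ∀ x, f x ≤ C) (hT : ∫⁻ x in T, f x ∂μ = κ * μ T)
    (he : Straddles μ T A → C * μ T ≤ e) :
    ∫⁻ x in A ∩ T, f x ∂μ ≤ κ * μ (A ∩ T) + e := by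
  by_cases h : Straddles μ T A
  · calc ∫⁻ x in A ∩ T, f x ∂μ ≤ ∫⁻ _ in A ∩ T, C ∂μ := lintegral_mono hfC
      _ = C * μ (A ∩ T) := setLIntegral_const _ C
      _ ≤ C * μ T := by gcongr; exact inter_subset_right
      _ ≤ κ * μ (A ∩ T) + e := (he h).trans le_add_self
  · rcases inter_ae_eq_or_measure_inter_eq_zero h with hAT | h0
    · rw [setLIntegral_congr hAT, measure_congr hAT, hT]
      exact le_self_add
    · rw [setLIntegral_measure_zero _ _ h0]
      exact zero_le

theorem mul_measure_inter_le_add (hκC : κ ≤ C) (hT : ∫⁻ x in T, f x ∂μ = κ * μ T)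
    (he : Straddles μ T A → C * μ T ≤ e) :
    κ * μ (A ∩ T) ≤ ∫⁻ x in A ∩ T, f x ∂μ + e := by
  by_cases h : Straddles μ T A
  · calc κ * μ (A ∩ T) ≤ C * μ T := mul_le_mul' hκC (measure_mono inter_subset_right)
      _ ≤ ∫⁻ x in A ∩ T, f x ∂μ + e := (he h).trans le_add_self
  · rcases inter_ae_eq_or_measure_inter_eq_zero h with hAT | h0
    · rw [setLIntegral_congr hAT, measure_congr hAT, hT]
      exact le_self_add
    · simp [h0]

end Straddles

section FundamentalDomain

variable {M Γ : Type*} [MeasurableSpace M] [Group Γ] [MulAction Γ M] {μ : Measure M}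
  {f : M → ℝ≥0∞} {X : Set M} {κ C : ℝ≥0∞}

theorem tsum_indicator_straddles (X A : Set M) (D : ℝ≥0∞) :
    ∑' γ : Γ, {γ : Γ | Straddles μ (γ • X) A}.indicator (fun _ => D) γ =
      D * boundaryCount Γ μ X A := by
  rw [boundaryCount_eq_encard_straddles, ← tsum_subtype, ENNReal.tsum_set_const, mul_comm]

variable [MeasurableConstSMul Γ M] [SMulInvariantMeasure Γ M μ]

theorem setLIntegral_smul_set_of_ae_invariant {γ : Γ} (hf : ∀ᵐ x ∂μ, f (γ • x) = f x)
    (s : Set M) : ∫⁻ x in γ • s, f x ∂μ = ∫⁻ x in s, f x ∂μ := by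
  rw [← image_smul, ← (measurePreserving_smul γ μ).setLIntegral_comp_emb
    (measurableEmbedding_const_smul γ)]
  exact lintegral_congr_ae (ae_restrict_of_ae hf)

variable [Countable Γ]

theorem setLIntegral_le_mul_measure_add_boundaryCount (hX : IsFundamentalDomain Γ X μ)
    (hfinv : ∀ γ : Γ, ∀ᵐ x ∂μ, f (γ • x) = f x) (hfC : ∀ x, f x ≤ C)
    (hκ : ∫⁻ x in X, f x ∂μ = κ * μ X) (A : Set M) :
    ∫⁻ x in A, f x ∂μ ≤ κ * μ A + C * μ X * boundaryCount Γ μ X A := by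
  rw [hX.setLIntegral_eq_tsum, hX.measure_eq_tsum', ← tsum_indicator_straddles,
    ← ENNReal.tsum_mul_left, ← ENNReal.tsum_add]
  refine ENNReal.tsum_le_tsum fun γ => setLIntegral_inter_le_add hfC ?_ fun h => ?_
  · rw [setLIntegral_smul_set_of_ae_invariant (hfinv γ), measure_smul, hκ]
  · rw [indicator_of_mem (show γ ∈ {γ : Γ | Straddles μ (γ • X) A} from h), measure_smul]

theorem mul_measure_le_setLIntegral_add_boundaryCount (hX : IsFundamentalDomain Γ X μ)
    (hfinv : ∀ γ : Γ, ∀ᵐ x ∂μ, f (γ • x) = f x) (hκC : κ ≤ C)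
    (hκ : ∫⁻ x in X, f x ∂μ = κ * μ X) (A : Set M) :
    κ * μ A ≤ ∫⁻ x in A, f x ∂μ + C * μ X * boundaryCount Γ μ X A := by
  rw [hX.setLIntegral_eq_tsum, hX.measure_eq_tsum', ← tsum_indicator_straddles,
    ← ENNReal.tsum_mul_left, ← ENNReal.tsum_add]
  refine ENNReal.tsum_le_tsum fun γ => mul_measure_inter_le_add hκC ?_ fun h => ?_
  · rw [setLIntegral_smul_set_of_ae_invariant (hfinv γ), measure_smul, hκ]
  · rw [indicator_of_mem (show γ ∈ {γ : Γ | Straddles μ (γ • X) A} from h), measure_smul]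

end FundamentalDomain

theorem liminf_average_eq_average_fundamentalDomain_general
    {M : Type*} [MeasurableSpace M]
    {Γ : Type*} [Group Γ] [Countable Γ] [MulAction Γ M]
    (hmeasΓ : ∀ γ : Γ, Measurable fun x : M => γ • x)
    (μ : Measure M) [SMulInvariantMeasure Γ M μ]
    (X : Set M) (hX : IsFundamentalDomain Γ X μ)
    (hX0 : 0 < μ X) (hXfin : μ X ≠ ⊤)
    (A : ℕ → Set M)
    (hA0 : ∀ n, 0 < μ (A n)) (hAfin : ∀ n, μ (A n) ≠ ⊤)
    (hbd : limsup (fun n => (boundaryCount Γ μ X (A n) : ℝ≥0∞) / μ (A n)) atTop = 0)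
    (f : M → ℝ≥0∞)
    (C : ℝ≥0∞) (hC : C ≠ ⊤) (hfC : ∀ x, f x ≤ C)
    (hfinv : ∀ γ : Γ, ∀ᵐ x ∂μ, f (γ • x) = f x) :
    (μ X)⁻¹ * ∫⁻ x in X, f x ∂μ =
      liminf (fun n => (μ (A n))⁻¹ * ∫⁻ x in A n, f x ∂μ) atTop := by
  have : MeasurableConstSMul Γ M := ⟨hmeasΓ⟩
  set κ := (μ X)⁻¹ * ∫⁻ x in X, f x ∂μ
  have hκ : ∫⁻ x in X, f x ∂μ = κ * μ X := by
    rw [mul_right_comm, ENNReal.inv_mul_cancel hX0.ne' hXfin, one_mul]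
  have hκC : κ ≤ C :=
    calc κ ≤ (μ X)⁻¹ * (C * μ X) :=
          mul_le_mul_right ((lintegral_mono hfC).trans_eq (setLIntegral_const X C)) _
      _ = C := by rw [mul_left_comm, ENNReal.inv_mul_cancel hX0.ne' hXfin, mul_one]
  have hε : Tendsto (fun n => C * μ X * boundaryCount Γ μ X (A n) / μ (A n)) atTop (𝓝 0) := by
    simp_rw [mul_div_assoc]
    simpa using ENNReal.Tendsto.const_mul (tendsto_of_le_liminf_of_limsup_le zero_le hbd.le)
      (Or.inr (mul_ne_top hC hXfin))
  refine (ENNReal.tendsto_of_le_add_of_le_add (hκC.trans_lt hC.lt_top).ne hε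
    (fun n => ?_) (fun n => ?_)).liminf_eq.symm
  · exact ENNReal.inv_mul_le_add_div (hA0 n).ne' (hAfin n)
      (setLIntegral_le_mul_measure_add_boundaryCount hX hfinv hfC hκ (A n))
  · exact ENNReal.le_inv_mul_add_div (hA0 n).ne' (hAfin n)
      (mul_measure_le_setLIntegral_add_boundaryCount hX hfinv hκC hκ (A n))

/-- For a sequence with asymptotically zero `(Γ,X)`-boundary, the averages of a bounded
nonnegative `Γ`-invariant measurable function over `A n` have liminf equal to its average
over the fundamental domain `X`. -/
theorem liminf_average_eq_average_fundamentalDomain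
    {M : Type*} [MeasurableSpace M]
    {Γ : Type*} [Group Γ] [Countable Γ] [MulAction Γ M]
    (hmeasΓ : ∀ γ : Γ, Measurable fun x : M => γ • x)
    (μ : Measure M) [SigmaFinite μ] [SMulInvariantMeasure Γ M μ]
    (X : Set M) (hXmeas : MeasurableSet X) (hX : IsFundamentalDomain Γ X μ)
    (hX0 : 0 < μ X) (hXfin : μ X ≠ ⊤)
    (A : ℕ → Set M) (hAmeas : ∀ n, MeasurableSet (A n))
    (hA0 : ∀ n, 0 < μ (A n)) (hAfin : ∀ n, μ (A n) ≠ ⊤)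
    (hbd : limsup (fun n => (boundaryCount Γ μ X (A n) : ℝ≥0∞) / μ (A n)) atTop = 0)
    (f : M → ℝ≥0∞) (hf : Measurable f)
    (C : ℝ≥0∞) (hC : C ≠ ⊤) (hfC : ∀ x, f x ≤ C)
    (hfinv : ∀ γ : Γ, ∀ᵐ x ∂μ, f (γ • x) = f x) :
    (μ X)⁻¹ * ∫⁻ x in X, f x ∂μ =
      liminf (fun n => (μ (A n))⁻¹ * ∫⁻ x in A n, f x ∂μ) atTop :=
  liminf_average_eq_average_fundamentalDomain_general hmeasΓ μ X hX hX0 hXfin A hA0 hAfin hbd f C hC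
    hfC hfinv
end

section
/- In the setting of two commuting measure-preserving actions of countable groups Γ, Λ on (M, B, m) with fundamental domains X, Y of finite positive measure and m(X) = (k+ε)·m(Y) (k ≥ 1 integer, 0 ≤ ε < 1): suppose there exist sequences of measurable sets A_n ⊆ B_n ⊆ C_n of finite positive measure such that lim m(A_n)/m(C_n) = 1, and such that for every γ ∈ Γ, m(A_n ∩ γ·X) ≠ 0 implies γ·X ⊆ B_n, and m(B_n ∩ γ·X) ≠ 0 implies γ·X ⊆ C_n (and similarly for Λ and Y). Then for every set A invariant under both actions, m(A ∩ X) = (k+ε)·m(A ∩ Y). -/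
open MeasureTheory Set Pointwise ENNReal Filter

/-!
Cut a set `P` into its pieces `P ∩ g • F` along a fundamental domain `F`. For a jointly
invariant `D`, each translate carries the same mass `μ (D ∩ g • F) = μ (D ∩ F)`, so
comparing the translates meeting `A n` with those contained in `B n` gives
`μ (A n) · μ (D ∩ X) ≤ μ (D ∩ B n) · μ X`, and the same for `Y` and `B n ⊆ C n`.
Chaining the `X`- and `Y`-estimates both ways yields
`μ (A n) · μ (D ∩ X) · μ Y ≤ μ (C n) · μ (D ∩ Y) · μ X` and its mirror image; since
`μ (A n) / μ (C n) → 1`, the ratios `μ (D ∩ X) / μ X` and `μ (D ∩ Y) / μ Y` agree.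
-/

namespace MeasureTheory

variable {M G : Type*} [MeasurableSpace M] [Group G] [MulAction G M]
  {μ : Measure M} [SMulInvariantMeasure G M μ]

theorem measure_inter_smul_eq_of_ae_smul_invariant {W : Set M}
    (hW : ∀ g : G, (g • W : Set M) =ᵐ[μ] W) (F : Set M) (g : G) :
    μ (W ∩ g • F) = μ (W ∩ F) :=
  calc μ (W ∩ g • F) = μ (g • (g⁻¹ • W ∩ F)) := by rw [smul_set_inter, smul_inv_smul]
    _ = μ (g⁻¹ • W ∩ F) := measure_smul μ g _
    _ = μ (W ∩ F) := measure_congr ((hW g⁻¹).inter (ae_eq_refl F))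

variable [Countable G] [MeasurableConstSMul G M] {F : Set M}

theorem IsFundamentalDomain.measure_inter_le_tsum (hF : IsFundamentalDomain G F μ)
    (P D : Set M) :
    μ (D ∩ P) ≤ ∑' g : {g : G | μ (P ∩ g • F) ≠ 0}, μ (D ∩ (g : G) • F) := by
  have hsupp : Function.support (fun g : G => μ (D ∩ P ∩ g • F)) ⊆
      {g : G | μ (P ∩ g • F) ≠ 0} := fun g hg hP =>
    hg (measure_mono_null (inter_subset_inter_left _ inter_subset_right) hP)
  calc μ (D ∩ P) = ∑' g : G, μ (D ∩ P ∩ g • F) := hF.measure_eq_tsum' _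
    _ = ∑' g : {g : G | μ (P ∩ g • F) ≠ 0}, μ (D ∩ P ∩ (g : G) • F) :=
      (tsum_subtype_eq_of_support_subset hsupp).symm
    _ ≤ _ := ENNReal.tsum_le_tsum fun g =>
      measure_mono (inter_subset_inter_left _ inter_subset_left)

theorem IsFundamentalDomain.tsum_measure_inter_le (hF : IsFundamentalDomain G F μ)
    {S : Set G} {Q : Set M} (hSQ : ∀ g ∈ S, g • F ⊆ Q) (E : Set M) :
    ∑' g : S, μ (E ∩ (g : G) • F) ≤ μ (E ∩ Q) :=
  calc ∑' g : S, μ (E ∩ (g : G) • F) = ∑' g : S, μ (E ∩ Q ∩ (g : G) • F) :=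
        tsum_congr fun g => by rw [inter_assoc, inter_eq_right.mpr (hSQ g g.2)]
    _ ≤ ∑' g : G, μ (E ∩ Q ∩ g • F) :=
        ENNReal.tsum_comp_le_tsum_of_injective Subtype.val_injective _
    _ = μ (E ∩ Q) := (hF.measure_eq_tsum' _).symm

/-- Both sides count the translates of `F` meeting `P`, weighted by the invariant masses. -/
theorem IsFundamentalDomain.measure_inter_mul_le (hF : IsFundamentalDomain G F μ)
    {P Q : Set M} (hPQ : ∀ g : G, μ (P ∩ g • F) ≠ 0 → g • F ⊆ Q) {D E : Set M}
    (hD : ∀ g : G, (g • D : Set M) =ᵐ[μ] D) (hE : ∀ g : G, (g • E : Set M) =ᵐ[μ] E) :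
    μ (D ∩ P) * μ (E ∩ F) ≤ μ (D ∩ F) * μ (E ∩ Q) :=
  calc μ (D ∩ P) * μ (E ∩ F)
      ≤ (∑' g : {g : G | μ (P ∩ g • F) ≠ 0}, μ (D ∩ (g : G) • F)) * μ (E ∩ F) :=
        mul_le_mul_left (hF.measure_inter_le_tsum P D) _
    _ = μ (D ∩ F) * ∑' g : {g : G | μ (P ∩ g • F) ≠ 0}, μ (E ∩ (g : G) • F) := by
        rw [← ENNReal.tsum_mul_right, ← ENNReal.tsum_mul_left]
        refine tsum_congr fun g => ?_
        rw [measure_inter_smul_eq_of_ae_smul_invariant hD,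
          measure_inter_smul_eq_of_ae_smul_invariant hE, mul_comm]
    _ ≤ μ (D ∩ F) * μ (E ∩ Q) := mul_le_mul_right (hF.tsum_measure_inter_le hPQ E) _

end MeasureTheory

theorem MeasureTheory.measure_mul_le_of_sandwich {M G H : Type*} [MeasurableSpace M]
    [Group G] [Countable G] [MulAction G M] [Group H] [Countable H] [MulAction H M]
    [MeasurableConstSMul G M] [MeasurableConstSMul H M] {μ : Measure M}
    [SMulInvariantMeasure G M μ] [SMulInvariantMeasure H M μ] {F F' : Set M}
    (hF : IsFundamentalDomain G F μ) (hF' : IsFundamentalDomain H F' μ) {P Q R : Set M}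
    (hPQ : ∀ g : G, μ (P ∩ g • F) ≠ 0 → g • F ⊆ Q)
    (hQR : ∀ h : H, μ (Q ∩ h • F') ≠ 0 → h • F' ⊆ R) {D : Set M}
    (hDG : ∀ g : G, (g • D : Set M) =ᵐ[μ] D)
    (hDH : ∀ h : H, (h • D : Set M) =ᵐ[μ] D) :
    μ P * (μ (D ∩ F) * μ F') ≤ μ R * (μ (D ∩ F') * μ F) := by
  have univ_G : ∀ g : G, (g • univ : Set M) =ᵐ[μ] univ := fun _ => by simp
  have univ_H : ∀ h : H, (h • univ : Set M) =ᵐ[μ] univ := fun _ => by simp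
  have hG := hF.measure_inter_mul_le hPQ univ_G hDG
  have hH := hF'.measure_inter_mul_le hQR hDH univ_H
  simp only [univ_inter] at hG hH
  calc μ P * (μ (D ∩ F) * μ F') = μ P * μ (D ∩ F) * μ F' := (mul_assoc _ _ _).symm
    _ ≤ μ F * μ (D ∩ Q) * μ F' := mul_le_mul_left hG _
    _ = μ (D ∩ Q) * μ F' * μ F := by ring
    _ ≤ μ (D ∩ F') * μ R * μ F := mul_le_mul_left hH _
    _ = μ R * (μ (D ∩ F') * μ F) := by ring

theorem ENNReal.le_of_tendsto_div_of_mul_le {a c : ℕ → ℝ≥0∞} {u v : ℝ≥0∞}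
    (hlim : Tendsto (fun n => a n / c n) atTop (nhds 1)) (h : ∀ n, a n * u ≤ c n * v) :
    u ≤ v := by
  have hle : ∀ n, a n / c n * u ≤ v := fun n =>
    calc a n / c n * u = (c n)⁻¹ * (a n * u) := by rw [div_eq_mul_inv]; ring
      _ ≤ (c n)⁻¹ * (c n * v) := mul_le_mul_right (h n) _
      _ = (c n)⁻¹ * c n * v := (mul_assoc _ _ _).symm
      _ ≤ 1 * v := mul_le_mul_left (ENNReal.inv_mul_le_one _) _
      _ = v := one_mul v
  have htend : Tendsto (fun n => a n / c n * u) atTop (nhds u) := by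
    simpa using ENNReal.Tendsto.mul_const hlim (Or.inl one_ne_zero)
  exact le_of_tendsto htend (Eventually.of_forall hle)

theorem measure_inter_eq_of_sandwich_sequences_general
    {M : Type*} [MeasurableSpace M]
    {Γ : Type*} [Group Γ] [Countable Γ] [MulAction Γ M]
    {Λ : Type*} [Group Λ] [Countable Λ] [MulAction Λ M]
    (hmeasΓ : ∀ γ : Γ, Measurable fun x : M => γ • x)
    (hmeasΛ : ∀ l : Λ, Measurable fun x : M => l • x)
    (μ : Measure M)
    [SMulInvariantMeasure Γ M μ] [SMulInvariantMeasure Λ M μ]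
    (X Y : Set M)
    (hX : IsFundamentalDomain Γ X μ) (hY : IsFundamentalDomain Λ Y μ)
    (hY0 : 0 < μ Y) (hYfin : μ Y ≠ ⊤)
    (k : ℕ) (ε : ℝ)
    (hcov : μ X = ((k : ℝ≥0∞) + ENNReal.ofReal ε) * μ Y)
    (A B C : ℕ → Set M)
    (hlim : Tendsto (fun n => μ (A n) / μ (C n)) atTop (nhds 1))
    (hΓA : ∀ n, ∀ γ : Γ, μ (A n ∩ γ • X) ≠ 0 → γ • X ⊆ B n)
    (hΓB : ∀ n, ∀ γ : Γ, μ (B n ∩ γ • X) ≠ 0 → γ • X ⊆ C n)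
    (hΛA : ∀ n, ∀ l : Λ, μ (A n ∩ l • Y) ≠ 0 → l • Y ⊆ B n)
    (hΛB : ∀ n, ∀ l : Λ, μ (B n ∩ l • Y) ≠ 0 → l • Y ⊆ C n) :
    ∀ D : Set M, MeasurableSet D →
      (∀ γ : Γ, μ (symmDiff (γ • D) D) = 0) →
      (∀ l : Λ, μ (symmDiff (l • D) D) = 0) →
      μ (D ∩ X) = ((k : ℝ≥0∞) + ENNReal.ofReal ε) * μ (D ∩ Y) := by
  intro D _ hDΓ hDΛ
  have : MeasurableConstSMul Γ M := ⟨hmeasΓ⟩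
  have : MeasurableConstSMul Λ M := ⟨hmeasΛ⟩
  have hDΓ' (γ : Γ) : (γ • D : Set M) =ᵐ[μ] D := measure_symmDiff_eq_zero_iff.mp (hDΓ γ)
  have hDΛ' (l : Λ) : (l • D : Set M) =ᵐ[μ] D := measure_symmDiff_eq_zero_iff.mp (hDΛ l)
  have hXY : μ (D ∩ X) * μ Y ≤ μ (D ∩ Y) * μ X :=
    ENNReal.le_of_tendsto_div_of_mul_le hlim fun n =>
      measure_mul_le_of_sandwich hX hY (hΓA n) (hΛB n) hDΓ' hDΛ'
  have hYX : μ (D ∩ Y) * μ X ≤ μ (D ∩ X) * μ Y :=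
    ENNReal.le_of_tendsto_div_of_mul_le hlim fun n =>
      measure_mul_le_of_sandwich hY hX (hΛA n) (hΓB n) hDΛ' hDΓ'
  have heq :
      μ (D ∩ X) * μ Y = ((k : ℝ≥0∞) + ENNReal.ofReal ε) * μ (D ∩ Y) * μ Y := by
    rw [le_antisymm hXY hYX, hcov]; ring
  exact (ENNReal.mul_left_inj hY0.ne' hYfin).mp heq

/-- If there are sequences `A n ⊆ B n ⊆ C n` with `μ (A n)/μ (C n) → 1` such that any
translate of `X` (resp. `Y`) meeting `A n` lies in `B n` and any translate meeting `B n`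
lies in `C n`, then `μ (A ∩ X) = (k+ε)·μ (A ∩ Y)` for every jointly invariant set. -/
theorem measure_inter_eq_of_sandwich_sequences
    {M : Type*} [MeasurableSpace M]
    {Γ : Type*} [Group Γ] [Countable Γ] [MulAction Γ M]
    {Λ : Type*} [Group Λ] [Countable Λ] [MulAction Λ M]
    (hmeasΓ : ∀ γ : Γ, Measurable fun x : M => γ • x)
    (hmeasΛ : ∀ l : Λ, Measurable fun x : M => l • x)
    (μ : Measure M) [SigmaFinite μ]
    [SMulInvariantMeasure Γ M μ] [SMulInvariantMeasure Λ M μ]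
    (hcomm : ∀ (γ : Γ) (l : Λ) (x : M), γ • (l • x) = l • (γ • x))
    (X Y : Set M) (hXmeas : MeasurableSet X) (hYmeas : MeasurableSet Y)
    (hX : IsFundamentalDomain Γ X μ) (hY : IsFundamentalDomain Λ Y μ)
    (hX0 : 0 < μ X) (hXfin : μ X ≠ ⊤) (hY0 : 0 < μ Y) (hYfin : μ Y ≠ ⊤)
    (k : ℕ) (hk : 1 ≤ k) (ε : ℝ) (hε0 : 0 ≤ ε) (hε1 : ε < 1)
    (hcov : μ X = ((k : ℝ≥0∞) + ENNReal.ofReal ε) * μ Y)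
    (A B C : ℕ → Set M)
    (hmeasA : ∀ n, MeasurableSet (A n)) (hmeasB : ∀ n, MeasurableSet (B n))
    (hmeasC : ∀ n, MeasurableSet (C n))
    (hAB : ∀ n, A n ⊆ B n) (hBC : ∀ n, B n ⊆ C n)
    (hA0 : ∀ n, 0 < μ (A n)) (hCfin : ∀ n, μ (C n) ≠ ⊤)
    (hlim : Tendsto (fun n => μ (A n) / μ (C n)) atTop (nhds 1))
    (hΓA : ∀ n, ∀ γ : Γ, μ (A n ∩ γ • X) ≠ 0 → γ • X ⊆ B n)
    (hΓB : ∀ n, ∀ γ : Γ, μ (B n ∩ γ • X) ≠ 0 → γ • X ⊆ C n)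
    (hΛA : ∀ n, ∀ l : Λ, μ (A n ∩ l • Y) ≠ 0 → l • Y ⊆ B n)
    (hΛB : ∀ n, ∀ l : Λ, μ (B n ∩ l • Y) ≠ 0 → l • Y ⊆ C n) :
    ∀ D : Set M, MeasurableSet D →
      (∀ γ : Γ, μ (symmDiff (γ • D) D) = 0) →
      (∀ l : Λ, μ (symmDiff (l • D) D) = 0) →
      μ (D ∩ X) = ((k : ℝ≥0∞) + ENNReal.ofReal ε) * μ (D ∩ Y) :=
  measure_inter_eq_of_sandwich_sequences_general hmeasΓ hmeasΛ μ X Y hX hY hY0 hYfin k ε hcov A B C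
    hlim hΓA hΓB hΛA hΛB
end

section
/- Let Λ ⋉_α Γ be a semidirect product of countable groups acting measure-preservingly on (M, B, m) via σ, such that the restriction to 1×Γ has a fundamental domain X and the restriction to Λ×1 has a fundamental domain Y, with 0 < m(X), m(Y) < ∞. If m(A ∩ X) = m(A ∩ Y) for every measurable set A invariant under the full semidirect product action, then the actions of 1×Γ and Λ×1 have a common fundamental domain. -/
/-!
Enumerate the countable group `G = Γ ⋊ Λ` so that every element occurs infinitely often, and
match `X` with `Y` greedily: at step `n`, the part of the still unmatched `X` that `g n` carries
into the still unmatched `Y` is matched. This cuts `X` into disjoint pieces `P n` whose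
translates `g n • P n` are disjoint pieces of `Y`. For the unmatched remainders `X'` and `Y'`,
each `h • X' ∩ Y'` is null: it lies in infinitely many disjoint pieces of `Y`, which has finite
measure. On a `G`-invariant set the matched parts of `X` and `Y` have equal measure, so the
hypothesis applied to the saturation of `X'` (resp. `Y'`) shows that `X'` (resp. `Y'`) is null.

Finally, writing `g n = inr r * inl c`, the set `⋃ n, inl (c n) • P n = ⋃ n, inr r⁻¹ • g n • P n`
is obtained from `X` by moving its pieces with `Γ` and from `Y` by moving its pieces with `Λ`,
so it is a fundamental domain for both.
-/

open MeasureTheory Set Pointwise ENNReal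

/-- `S` is a fundamental domain for the restriction of the action to the image of a family
of group elements `a : ι → G`. -/
def IsSubFD {M : Type*} [MeasurableSpace M] {G : Type*} [Group G] [MulAction G M]
    (μ : Measure M) {ι : Type*} (a : ι → G) (S : Set M) : Prop :=
  μ ((⋃ i : ι, a i • S)ᶜ) = 0 ∧ Pairwise fun i j : ι => μ ((a i • S) ∩ (a j • S)) = 0

open Function

section Peeling

variable {α : Type*} {f p : ℕ → Set α}

theorem pairwise_disjoint_of_succ_eq_sdiff_s13 (hf : ∀ n, f (n + 1) = f n \ p n)
    (hp : ∀ n, p n ⊆ f n) : Pairwise (Disjoint on p) := by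
  have hanti : Antitone f := antitone_nat_of_succ_le fun n => (hf n).symm ▸ sdiff_subset
  refine (pairwise_disjoint_on p).mpr fun m n hmn => ?_
  have hpn : p n ⊆ f m \ p m := hf m ▸ (hp n).trans (hanti hmn)
  exact disjoint_sdiff_right.mono_right hpn

theorem subset_zero_of_succ_eq_sdiff (hf : ∀ n, f (n + 1) = f n \ p n)
    (hp : ∀ n, p n ⊆ f n) (n : ℕ) : p n ⊆ f 0 :=
  (hp n).trans (antitone_nat_of_succ_le (fun n => (hf n).symm ▸ sdiff_subset) n.zero_le)

theorem zero_sdiff_iUnion_eq_iInter_of_succ_eq_sdiff (hf : ∀ n, f (n + 1) = f n \ p n) :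
    f 0 \ ⋃ n, p n = ⋂ n, f n := by
  ext x
  simp only [mem_sdiff, mem_iUnion, mem_iInter, not_exists]
  constructor
  · rintro ⟨h0, hp⟩ n
    induction n with
    | zero => exact h0
    | succ n ih => rw [hf]; exact ⟨ih, hp n⟩
  · intro h
    refine ⟨h 0, fun n hn => ?_⟩
    have hsucc := h (n + 1)
    rw [hf] at hsucc
    exact hsucc.2 hn

end Peeling

section Action

variable {M G : Type*} [Group G] [MulAction G M]

theorem smul_iUnion_smul (g : G) (s : Set M) : g • ⋃ h : G, h • s = ⋃ h : G, h • s := by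
  simp_rw [smul_set_iUnion, smul_smul]
  exact (Equiv.mulLeft g).surjective.iUnion_comp (· • s)

def greedyRemainder (X Y : Set M) (g : ℕ → G) : ℕ → Set M × Set M
  | 0 => (X, Y)
  | n + 1 =>
    let r := greedyRemainder X Y g n
    (r.1 \ (g n)⁻¹ • r.2, r.2 \ g n • r.1)

def greedyPiece (X Y : Set M) (g : ℕ → G) (n : ℕ) : Set M :=
  (greedyRemainder X Y g n).1 ∩ (g n)⁻¹ • (greedyRemainder X Y g n).2

variable {X Y : Set M} {g : ℕ → G}

theorem smul_greedyPiece (n : ℕ) :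
    g n • greedyPiece X Y g n =
      g n • (greedyRemainder X Y g n).1 ∩ (greedyRemainder X Y g n).2 := by
  rw [greedyPiece, smul_set_inter, smul_inv_smul]

theorem greedyRemainder_fst_succ (n : ℕ) :
    (greedyRemainder X Y g (n + 1)).1 = (greedyRemainder X Y g n).1 \ greedyPiece X Y g n :=
  sdiff_self_inter.symm

theorem greedyRemainder_snd_succ (n : ℕ) :
    (greedyRemainder X Y g (n + 1)).2 =
      (greedyRemainder X Y g n).2 \ g n • greedyPiece X Y g n := by
  rw [smul_greedyPiece]
  exact sdiff_inter_self_eq_sdiff.symm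

theorem greedyPiece_subset_greedyRemainder (n : ℕ) :
    greedyPiece X Y g n ⊆ (greedyRemainder X Y g n).1 :=
  inter_subset_left

theorem smul_greedyPiece_subset_greedyRemainder (n : ℕ) :
    g n • greedyPiece X Y g n ⊆ (greedyRemainder X Y g n).2 :=
  (smul_greedyPiece n).trans_subset inter_subset_right

theorem greedyPiece_subset (n : ℕ) : greedyPiece X Y g n ⊆ X :=
  subset_zero_of_succ_eq_sdiff greedyRemainder_fst_succ greedyPiece_subset_greedyRemainder n

theorem smul_greedyPiece_subset (n : ℕ) : g n • greedyPiece X Y g n ⊆ Y :=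
  subset_zero_of_succ_eq_sdiff (p := fun n => g n • greedyPiece X Y g n) greedyRemainder_snd_succ
    smul_greedyPiece_subset_greedyRemainder n

theorem pairwise_disjoint_greedyPiece : Pairwise (Disjoint on greedyPiece X Y g) :=
  pairwise_disjoint_of_succ_eq_sdiff_s13 greedyRemainder_fst_succ greedyPiece_subset_greedyRemainder

theorem pairwise_disjoint_smul_greedyPiece :
    Pairwise (Disjoint on fun n => g n • greedyPiece X Y g n) :=
  pairwise_disjoint_of_succ_eq_sdiff_s13 greedyRemainder_snd_succ
    smul_greedyPiece_subset_greedyRemainder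

theorem sdiff_iUnion_greedyPiece :
    X \ ⋃ n, greedyPiece X Y g n = ⋂ n, (greedyRemainder X Y g n).1 :=
  zero_sdiff_iUnion_eq_iInter_of_succ_eq_sdiff (f := fun n => (greedyRemainder X Y g n).1)
    greedyRemainder_fst_succ

theorem sdiff_iUnion_smul_greedyPiece :
    Y \ ⋃ n, g n • greedyPiece X Y g n = ⋂ n, (greedyRemainder X Y g n).2 :=
  zero_sdiff_iUnion_eq_iInter_of_succ_eq_sdiff (f := fun n => (greedyRemainder X Y g n).2)
    greedyRemainder_snd_succ

theorem smul_iInter_inter_iInter_subset_smul_greedyPiece (n : ℕ) :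
    g n • (⋂ k, (greedyRemainder X Y g k).1) ∩ ⋂ k, (greedyRemainder X Y g k).2 ⊆
      g n • greedyPiece X Y g n := by
  rw [smul_greedyPiece]
  exact inter_subset_inter (smul_set_mono (iInter_subset _ n)) (iInter_subset _ n)

theorem measurableSet_greedyRemainder [MeasurableSpace M] [MeasurableConstSMul G M]
    (hX : MeasurableSet X) (hY : MeasurableSet Y) (n : ℕ) :
    MeasurableSet (greedyRemainder X Y g n).1 ∧ MeasurableSet (greedyRemainder X Y g n).2 := by
  induction n with
  | zero => exact ⟨hX, hY⟩
  | succ n ih => exact ⟨ih.1.diff (ih.2.const_smul _), ih.2.diff (ih.1.const_smul _)⟩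

theorem measurableSet_greedyPiece [MeasurableSpace M] [MeasurableConstSMul G M]
    (hX : MeasurableSet X) (hY : MeasurableSet Y) (n : ℕ) :
    MeasurableSet (greedyPiece X Y g n) :=
  (measurableSet_greedyRemainder hX hY n).1.inter
    ((measurableSet_greedyRemainder hX hY n).2.const_smul _)

end Action

section Measure

variable {M G : Type*} [MeasurableSpace M] [Group G] [MulAction G M] {μ : Measure M}

theorem measure_eq_zero_of_forall_subset_of_pairwise_disjoint {s : Set M} {t : ℕ → Set M}
    (hs : ∀ n, s ⊆ t n) (ht : ∀ n, MeasurableSet (t n)) (hdisj : Pairwise (Disjoint on t))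
    (hfin : μ (⋃ n, t n) ≠ ∞) : μ s = 0 := by
  by_contra hs0
  refine hfin (top_le_iff.mp ?_)
  calc ∞ = ∑' _ : ℕ, μ s := (ENNReal.tsum_const_eq_top_of_ne_zero hs0).symm
    _ ≤ ∑' n, μ (t n) := ENNReal.tsum_le_tsum fun n => measure_mono (hs n)
    _ ≤ μ (⋃ n, t n) := tsum_meas_le_meas_iUnion_of_disjoint μ ht hdisj

variable (G) in
def EqOnInvariantSets (μ : Measure M) (X Y : Set M) : Prop :=
  ∀ W : Set M, MeasurableSet W → (∀ g : G, g • W = W) → μ (W ∩ X) = μ (W ∩ Y)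

theorem EqOnInvariantSets.symm {X Y : Set M} (h : EqOnInvariantSets G μ X Y) :
    EqOnInvariantSets G μ Y X :=
  fun W hW hWinv => (h W hW hWinv).symm

theorem eqOnInvariantSets_iUnion_smul [MeasurableConstSMul G M] [SMulInvariantMeasure G M μ]
    {ι : Type*} [Countable ι] (g : ι → G) {P : ι → Set M} (hP : ∀ i, MeasurableSet (P i))
    (hPd : Pairwise (Disjoint on P)) (hQd : Pairwise (Disjoint on fun i => g i • P i)) :
    EqOnInvariantSets G μ (⋃ i, P i) (⋃ i, g i • P i) := by
  intro W hW hWinv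
  have hsmul (i : ι) : W ∩ g i • P i = g i • (W ∩ P i) := by rw [smul_set_inter, hWinv]
  rw [inter_iUnion, inter_iUnion, measure_iUnion (hPd.mono fun _ _ => .mono inter_subset_right
      inter_subset_right) fun i => hW.inter (hP i),
    measure_iUnion (hQd.mono fun _ _ => .mono inter_subset_right inter_subset_right)
      fun i => hW.inter ((hP i).const_smul _)]
  simp_rw [hsmul, measure_smul]

end Measure

section Equidecomposition

variable {M G : Type*} [MeasurableSpace M] [Group G] [MulAction G M] [Countable G]
  [MeasurableConstSMul G M] {μ : Measure M}

theorem measure_sdiff_eq_zero_of_eqOnInvariantSets {X Y D R : Set M} (hX : MeasurableSet X)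
    (hD : MeasurableSet D) (hDX : D ⊆ X) (hXfin : μ X ≠ ∞)
    (hXY : EqOnInvariantSets G μ X Y) (hDR : EqOnInvariantSets G μ D R)
    (hrem : ∀ g : G, μ (g • (X \ D) ∩ (Y \ R)) = 0) : μ (X \ D) = 0 := by
  set A := ⋃ g : G, g • (X \ D)
  have hA : MeasurableSet A := .iUnion fun g => (hX.diff hD).const_smul g
  have hAinv (g : G) : g • A = A := smul_iUnion_smul g _
  have hXA : X \ D ⊆ A := subset_iUnion_of_subset 1 (one_smul G (X \ D)).superset
  have hAX : μ (A ∩ X) = μ (A ∩ D) + μ (X \ D) := by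
    rw [← measure_union (disjoint_sdiff_right.mono_left inter_subset_right) (hX.diff hD)]
    congr 1
    ext x
    constructor
    · rintro ⟨hxA, hxX⟩
      by_cases hxD : x ∈ D
      exacts [.inl ⟨hxA, hxD⟩, .inr ⟨hxX, hxD⟩]
    · rintro (⟨hxA, hxD⟩ | hx)
      exacts [⟨hxA, hDX hxD⟩, ⟨hXA hx, hx.1⟩]
  have hAY : μ (A ∩ Y) ≤ μ (A ∩ R) := by
    have hcover : A ∩ Y ⊆ (A ∩ R) ∪ ⋃ g : G, g • (X \ D) ∩ (Y \ R) := by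
      rintro x ⟨hxA, hxY⟩
      by_cases hxR : x ∈ R
      · exact .inl ⟨hxA, hxR⟩
      · obtain ⟨g, hg⟩ := mem_iUnion.mp hxA
        exact .inr (mem_iUnion.mpr ⟨g, hg, hxY, hxR⟩)
    calc μ (A ∩ Y) ≤ μ (A ∩ R) + μ (⋃ g : G, g • (X \ D) ∩ (Y \ R)) :=
          (measure_mono hcover).trans (measure_union_le _ _)
      _ = μ (A ∩ R) := by rw [measure_iUnion_null hrem, add_zero]
  have hfin : μ (A ∩ D) ≠ ∞ :=
    ne_top_of_le_ne_top hXfin (measure_mono (inter_subset_right.trans hDX))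
  refine le_antisymm ((ENNReal.add_le_add_iff_left hfin).mp ?_) zero_le
  calc μ (A ∩ D) + μ (X \ D) = μ (A ∩ Y) := by rw [← hAX, hXY A hA hAinv]
    _ ≤ μ (A ∩ R) := hAY
    _ = μ (A ∩ D) + 0 := by rw [hDR A hA hAinv, add_zero]

theorem exists_equidecomposition_of_eqOnInvariantSets [SMulInvariantMeasure G M μ]
    {X Y : Set M} (hX : MeasurableSet X) (hY : MeasurableSet Y) (hXfin : μ X ≠ ∞)
    (hYfin : μ Y ≠ ∞) (hXY : EqOnInvariantSets G μ X Y) :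
    ∃ (g : ℕ → G) (P : ℕ → Set M), (∀ n, MeasurableSet (P n)) ∧ (∀ n, P n ⊆ X) ∧
      (∀ n, g n • P n ⊆ Y) ∧ Pairwise (Disjoint on P) ∧
      Pairwise (Disjoint on fun n => g n • P n) ∧
      μ (X \ ⋃ n, P n) = 0 ∧ μ (Y \ ⋃ n, g n • P n) = 0 := by
  obtain ⟨e, he⟩ := exists_surjective_nat G
  -- every element of `G` occurs infinitely often in `g`
  set g : ℕ → G := fun n => e n.unpair.1
  set P := greedyPiece X Y g
  have hP (n : ℕ) : MeasurableSet (P n) := measurableSet_greedyPiece hX hY n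
  have hQ (n : ℕ) : MeasurableSet (g n • P n) := (hP n).const_smul _
  have hrem (h : G) : μ (h • (X \ ⋃ n, P n) ∩ (Y \ ⋃ n, g n • P n)) = 0 := by
    obtain ⟨m, rfl⟩ := he h
    have hpair : Injective (Nat.pair m) := fun _ _ hk => (Nat.pair_eq_pair.mp hk).2
    refine measure_eq_zero_of_forall_subset_of_pairwise_disjoint
      (t := fun k => g (m.pair k) • P (m.pair k)) (fun k => ?_) (fun k => hQ _)
      ((pairwise_disjoint_smul_greedyPiece (X := X) (Y := Y) (g := g)).comp_of_injective hpair)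
      (ne_top_of_le_ne_top hYfin (measure_mono (iUnion_subset fun k => smul_greedyPiece_subset _)))
    rw [sdiff_iUnion_greedyPiece, sdiff_iUnion_smul_greedyPiece]
    simpa only [g, Nat.unpair_pair] using
      smul_iInter_inter_iInter_subset_smul_greedyPiece (X := X) (Y := Y) (g := g) (m.pair k)
  have hDR : EqOnInvariantSets G μ (⋃ n, P n) (⋃ n, g n • P n) :=
    eqOnInvariantSets_iUnion_smul g hP pairwise_disjoint_greedyPiece
      pairwise_disjoint_smul_greedyPiece
  refine ⟨g, P, hP, greedyPiece_subset, smul_greedyPiece_subset, pairwise_disjoint_greedyPiece,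
    pairwise_disjoint_smul_greedyPiece, ?_, ?_⟩
  · exact measure_sdiff_eq_zero_of_eqOnInvariantSets hX (.iUnion hP)
      (iUnion_subset greedyPiece_subset) hXfin hXY hDR hrem
  · refine measure_sdiff_eq_zero_of_eqOnInvariantSets hY (.iUnion hQ)
      (iUnion_subset smul_greedyPiece_subset) hYfin hXY.symm hDR.symm fun h => ?_
    rw [inter_comm, ← measure_inv_smul_inter]
    exact hrem h⁻¹

end Equidecomposition

theorem IsSubFD.iUnion_smul {M G H ι : Type*} [MeasurableSpace M] [Group G] [MulAction G M]
    [Group H] [Countable H] [Countable ι] {μ : Measure M} [SMulInvariantMeasure G M μ]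
    {a : H →* G} {X : Set M} (hX : IsSubFD μ a X) {P : ι → Set M} (hPX : ∀ i, P i ⊆ X)
    (hPd : Pairwise (Disjoint on P)) (hcover : μ (X \ ⋃ i, P i) = 0) (c : ι → H) :
    IsSubFD μ a (⋃ i, a (c i) • P i) := by
  set F := ⋃ i, a (c i) • P i
  have hmove (γ : H) (i : ι) {w : M} (hw : w ∈ P i) : a γ • w ∈ a (γ * (c i)⁻¹) • F := by
    rw [show a γ • w = a (γ * (c i)⁻¹) • a (c i) • w by
      rw [smul_smul, ← map_mul, inv_mul_cancel_right]]
    exact smul_mem_smul_set (mem_iUnion.mpr ⟨i, smul_mem_smul_set hw⟩)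
  constructor
  · have hsub : (⋃ γ, a γ • F)ᶜ ⊆ (⋃ γ, a γ • X)ᶜ ∪ ⋃ γ, a γ • (X \ ⋃ i, P i) := by
      intro x hxF
      rw [mem_union, or_iff_not_imp_left, mem_compl_iff, not_not]
      intro hxX
      obtain ⟨γ, w, hwX, rfl⟩ := mem_iUnion.mp hxX
      by_cases hw : w ∈ ⋃ i, P i
      · obtain ⟨i, hi⟩ := mem_iUnion.mp hw
        exact absurd (mem_iUnion.mpr ⟨γ * (c i)⁻¹, hmove γ i hi⟩) hxF
      · exact mem_iUnion.mpr ⟨γ, w, ⟨hwX, hw⟩, rfl⟩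
    exact measure_mono_null hsub (measure_union_null hX.1 (measure_iUnion_null fun γ => by
      rw [measure_smul]; exact hcover))
  · intro γ γ' hγ
    have hsub : a γ • F ∩ a γ' • F ⊆
        ⋃ (i) (j), a (γ * c i) • P i ∩ a (γ' * c j) • P j := by
      simp only [F, smul_set_iUnion, iUnion_inter_iUnion, smul_smul, ← map_mul]
      rfl
    refine measure_mono_null hsub (measure_iUnion_null fun i => measure_iUnion_null fun j => ?_)
    by_cases hij : γ * c i = γ' * c j
    · have hne : i ≠ j := by rintro rfl; exact hγ (mul_right_cancel hij)
      rw [hij, ← smul_set_inter, (hPd hne).inter_eq, smul_set_empty, measure_empty]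
    · exact measure_mono_null
        (inter_subset_inter (smul_set_mono (hPX i)) (smul_set_mono (hPX j))) (hX.2 hij)

theorem semidirect_common_fundamentalDomain_general
    {M : Type*} [MeasurableSpace M]
    {Γ Λ : Type*} [Group Γ] [Group Λ] [Countable Γ] [Countable Λ]
    (α : Λ →* MulAut Γ)
    [MulAction (Γ ⋊[α] Λ) M]
    (hmeas : ∀ g : Γ ⋊[α] Λ, Measurable fun x : M => g • x)
    (μ : Measure M) [SMulInvariantMeasure (Γ ⋊[α] Λ) M μ]
    (X Y : Set M) (hXmeas : MeasurableSet X) (hYmeas : MeasurableSet Y)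
    (hX : IsSubFD μ (fun γ : Γ => SemidirectProduct.inl (φ := α) γ) X)
    (hY : IsSubFD μ (fun l : Λ => SemidirectProduct.inr (φ := α) l) Y)
    (hXfin : μ X ≠ ⊤) (hYfin : μ Y ≠ ⊤)
    (hinv : ∀ A : Set M, MeasurableSet A →
      (∀ g : Γ ⋊[α] Λ, μ (symmDiff (g • A) A) = 0) →
      μ (A ∩ X) = μ (A ∩ Y)) :
    ∃ F : Set M, MeasurableSet F ∧
      IsSubFD μ (fun γ : Γ => SemidirectProduct.inl (φ := α) γ) F ∧
      IsSubFD μ (fun l : Λ => SemidirectProduct.inr (φ := α) l) F := by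
  have : Countable (Γ ⋊[α] Λ) := SemidirectProduct.equivProd.injective.countable
  have : MeasurableConstSMul (Γ ⋊[α] Λ) M := ⟨hmeas⟩
  have hXY : EqOnInvariantSets (Γ ⋊[α] Λ) μ X Y := fun W hW hWinv =>
    hinv W hW fun g => by rw [hWinv g, symmDiff_self, bot_eq_empty, measure_empty]
  obtain ⟨g, P, hP, hPX, hQY, hPd, hQd, hXcover, hYcover⟩ :=
    exists_equidecomposition_of_eqOnInvariantSets hXmeas hYmeas hXfin hYfin hXY
  set c : ℕ → Γ := fun n => α (g n).right⁻¹ (g n).left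
  have hc (n : ℕ) : SemidirectProduct.inl (c n) = SemidirectProduct.inr (g n).right⁻¹ * g n := by
    ext <;> simp [c]
  have hF : ⋃ n, SemidirectProduct.inl (φ := α) (c n) • P n =
      ⋃ n, SemidirectProduct.inr (φ := α) (g n).right⁻¹ • g n • P n := by
    simp_rw [hc, mul_smul]
  refine ⟨⋃ n, SemidirectProduct.inl (c n) • P n, .iUnion fun n => (hP n).const_smul _,
    hX.iUnion_smul hPX hPd hXcover c, ?_⟩
  rw [hF]
  exact hY.iUnion_smul hQY hQd hYcover _

/-- For a measure-preserving action of a semidirect product `Γ ⋊[α] Λ` such that `1 × Γ`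
has a fundamental domain `X` and `Λ × 1` has a fundamental domain `Y`, both of finite
positive measure, if `μ (A ∩ X) = μ (A ∩ Y)` for every set invariant under the whole
semidirect product, then the two subgroup actions have a common fundamental domain. -/
theorem semidirect_common_fundamentalDomain
    {M : Type*} [MeasurableSpace M]
    {Γ Λ : Type*} [Group Γ] [Group Λ] [Countable Γ] [Countable Λ]
    (α : Λ →* MulAut Γ)
    [MulAction (Γ ⋊[α] Λ) M]
    (hmeas : ∀ g : Γ ⋊[α] Λ, Measurable fun x : M => g • x)
    (μ : Measure M) [SigmaFinite μ] [SMulInvariantMeasure (Γ ⋊[α] Λ) M μ]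
    (X Y : Set M) (hXmeas : MeasurableSet X) (hYmeas : MeasurableSet Y)
    (hX : IsSubFD μ (fun γ : Γ => SemidirectProduct.inl (φ := α) γ) X)
    (hY : IsSubFD μ (fun l : Λ => SemidirectProduct.inr (φ := α) l) Y)
    (hX0 : 0 < μ X) (hXfin : μ X ≠ ⊤) (hY0 : 0 < μ Y) (hYfin : μ Y ≠ ⊤)
    (hinv : ∀ A : Set M, MeasurableSet A →
      (∀ g : Γ ⋊[α] Λ, μ (symmDiff (g • A) A) = 0) →
      μ (A ∩ X) = μ (A ∩ Y)) :
    ∃ F : Set M, MeasurableSet F ∧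
      IsSubFD μ (fun γ : Γ => SemidirectProduct.inl (φ := α) γ) F ∧
      IsSubFD μ (fun l : Λ => SemidirectProduct.inr (φ := α) l) F :=
  semidirect_common_fundamentalDomain_general α hmeas μ X Y hXmeas hYmeas hX hY hXfin hYfin hinv
end
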